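/- arXiv:1312.6652 — 13 statements merged into one kernel-verified Lean document; each statement's English description precedes it below -/
import Mathlib

section
/- Let n, d, c, k be positive integers, let ℓ be an integer with ℓ ≥ 10·d·c·k, let Ẽ be a level-ℓ pseudoexpectation functional on polynomials in x₁,…,xₙ, and let P be a sum of squares of real polynomials with total degree of P at most d. Set r = c·k and r' = (c+1)·k. Then Ẽ(P^r) ≥ 0 and Ẽ(P^{r'}) ≥ (Ẽ(P^r))^{(c+1)/c}, where the right-hand side is the real power (Ẽ(P^r))^{r'/r}. -/
/-!
Let `b j = Ẽ(P ^ j)`. Since `P = ∑ Rᵢ²`, the functional `q ↦ Ẽ(P q)` is, like `Ẽ`, nonnegative on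
squares of low degree, so Cauchy–Schwarz for `Ẽ` (at even `a`) or for `q ↦ Ẽ(P q)` (at odd `a`)
gives `b (a+1)² ≤ b a * b (a+2)`: the moments are nonnegative and log-convex. Together with
`b 0 = 1` this makes `j ↦ b j ^ (1/j)` nondecreasing, which is the claim for `j = r, r'`.
The degree budget suffices because `deg Rᵢ ≤ deg P`.
-/

open MonomialOrder

namespace MvPolynomial

/-- In the degree-lexicographic order the top monomial of `∑ Rⱼ²` is `2 M` for the largest leading
monomial `M`, and its coefficient is a sum of squares with a nonzero term. -/
theorem two_mul_totalDegree_le_totalDegree_sum_sq {σ K ι : Type*} [LinearOrder σ]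
    [WellFoundedGT σ] [CommRing K] [LinearOrder K] [IsStrictOrderedRing K] [Fintype ι]
    (R : ι → MvPolynomial σ K) (i : ι) :
    2 * (R i).totalDegree ≤ (∑ j, R j ^ 2).totalDegree := by
  obtain ⟨i₀, -, hmax⟩ := Finset.exists_max_image Finset.univ
    (fun j => degLex.toSyn (degLex.degree (R j))) ⟨i, Finset.mem_univ i⟩
  have hmax (j : ι) := hmax j (Finset.mem_univ j)
  have hle : (R i).totalDegree ≤ (R i₀).totalDegree := degLex_totalDegree_monotone (hmax i)
  by_cases h0 : R i₀ = 0
  · simp_all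
  set M := degLex.degree (R i₀)
  have hcoeff (j : ι) : (R j ^ 2).coeff (M + M) = (R j).coeff M ^ 2 := by
    rw [sq, sq, degLex.coeff_mul_of_add_of_degree_le (hmax j) (hmax j)]
  have hpos : 0 < (∑ j, R j ^ 2).coeff (M + M) := by
    simp only [coeff_sum, hcoeff]
    exact Finset.sum_pos' (fun j _ => sq_nonneg _) ⟨i₀, Finset.mem_univ _,
      sq_pos_of_ne_zero (mem_support_iff.mp (degLex.degree_mem_support h0))⟩
  calc 2 * (R i).totalDegree ≤ (M + M).degree := by
        rw [map_add, degree_degLexDegree]; omega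
    _ ≤ (∑ j, R j ^ 2).totalDegree := le_totalDegree (mem_support_iff.mpr hpos.ne')

theorem totalDegree_pow_le_of_le {σ K : Type*} [CommSemiring K] {P : MvPolynomial σ K} {d : ℕ}
    (hP : P.totalDegree ≤ d) (u : ℕ) : (P ^ u).totalDegree ≤ u * d :=
  (totalDegree_pow P u).trans (Nat.mul_le_mul_left u hP)

end MvPolynomial

open MvPolynomial

theorem LinearMap.sq_map_mul_le_of_sq_nonneg {A : Type*} [CommRing A] [Algebra ℝ A]
    (F : A →ₗ[ℝ] ℝ) {V : Submodule ℝ A} (hF : ∀ q ∈ V, 0 ≤ F (q ^ 2)) {f g : A}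
    (hf : f ∈ V) (hg : g ∈ V) : F (f * g) ^ 2 ≤ F (f ^ 2) * F (g ^ 2) := by
  have hquad (t : ℝ) : 0 ≤ F (g ^ 2) * (t * t) + 2 * F (f * g) * t + F (f ^ 2) := by
    have hexpand : (f + t • g) ^ 2 = f ^ 2 + (2 * t) • (f * g) + (t * t) • g ^ 2 := by
      simp only [Algebra.smul_def, map_mul, map_ofNat]
      ring
    have h := hF _ (V.add_mem hf (V.smul_mem t hg))
    rw [hexpand, map_add, map_add, map_smul, map_smul, smul_eq_mul, smul_eq_mul] at h
    linarith
  have hdisc := discrim_le_zero hquad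
  rw [discrim] at hdisc
  nlinarith

section Moments

variable {σ ι : Type*} {E : MvPolynomial σ ℝ →ₗ[ℝ] ℝ} {B d : ℕ} {P : MvPolynomial σ ℝ}

theorem map_sum_sq_mul_sq_nonneg [Fintype ι]
    (hE : ∀ q : MvPolynomial σ ℝ, q.totalDegree ≤ B → 0 ≤ E (q ^ 2))
    {R : ι → MvPolynomial σ ℝ} (hR : ∀ i, (R i).totalDegree ≤ d)
    {q : MvPolynomial σ ℝ} (hq : q.totalDegree + d ≤ B) : 0 ≤ E ((∑ i, R i ^ 2) * q ^ 2) := by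
  rw [Finset.sum_mul, map_sum]
  refine Finset.sum_nonneg fun i _ => ?_
  rw [← mul_pow]
  exact hE _ ((totalDegree_mul _ _).trans (by linarith [hR i]))

section

variable {F : MvPolynomial σ ℝ →ₗ[ℝ] ℝ}
  (hF : ∀ q : MvPolynomial σ ℝ, q.totalDegree ≤ B → 0 ≤ F (q ^ 2)) (hP : P.totalDegree ≤ d)
include hF hP

theorem map_pow_two_mul_nonneg {u : ℕ} (hu : u * d ≤ B) : 0 ≤ F (P ^ (2 * u)) := by
  rw [pow_mul']
  exact hF _ ((totalDegree_pow_le_of_le hP u).trans hu)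

theorem sq_map_pow_two_mul_add_one_le {u : ℕ} (hu : (u + 1) * d ≤ B) :
    F (P ^ (2 * u + 1)) ^ 2 ≤ F (P ^ (2 * u)) * F (P ^ (2 * u + 2)) := by
  have hmem {v : ℕ} (hv : v ≤ u + 1) : P ^ v ∈ restrictTotalDegree σ ℝ B :=
    (mem_restrictTotalDegree _ _ _).mpr
      ((totalDegree_pow_le_of_le hP v).trans ((Nat.mul_le_mul_right d hv).trans hu))
  have h := F.sq_map_mul_le_of_sq_nonneg (fun q hq => hF q ((mem_restrictTotalDegree _ _ _).mp hq))
    (hmem u.le_succ) (hmem le_rfl)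
  rwa [← pow_add, ← pow_mul', ← pow_mul', show u + (u + 1) = 2 * u + 1 by ring,
    show 2 * (u + 1) = 2 * u + 2 by ring] at h

end

variable (hE : ∀ q : MvPolynomial σ ℝ, q.totalDegree ≤ B → 0 ≤ E (q ^ 2))
  (hPE : ∀ q : MvPolynomial σ ℝ, q.totalDegree ≤ B → 0 ≤ E (P * q ^ 2))
  (hP : P.totalDegree ≤ d) {N : ℕ} (hN : N * d ≤ 2 * B)
include hE hPE hP hN

theorem map_pow_nonneg {j : ℕ} (hj : j ≤ N) : 0 ≤ E (P ^ j) := by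
  have hu {u : ℕ} (hu : 2 * u ≤ N) : u * d ≤ B := by nlinarith
  obtain ⟨u, rfl | rfl⟩ := Nat.even_or_odd' j
  · exact map_pow_two_mul_nonneg hE hP (hu hj)
  · rw [pow_succ']
    exact map_pow_two_mul_nonneg (F := E.comp (LinearMap.mulLeft ℝ P)) hPE hP (hu (by omega))

theorem sq_map_pow_succ_le {a : ℕ} (ha : a + 2 ≤ N) :
    E (P ^ (a + 1)) ^ 2 ≤ E (P ^ a) * E (P ^ (a + 2)) := by
  have hu {u : ℕ} (hu : 2 * u + 2 ≤ N) : (u + 1) * d ≤ B := by nlinarith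
  obtain ⟨u, rfl | rfl⟩ := Nat.even_or_odd' a
  · exact sq_map_pow_two_mul_add_one_le hE hP (hu ha)
  · have h := sq_map_pow_two_mul_add_one_le (F := E.comp (LinearMap.mulLeft ℝ P)) hPE hP
      (hu (u := u) (by omega))
    simp only [LinearMap.comp_apply, LinearMap.mulLeft_apply, ← pow_succ'] at h
    rwa [show 2 * u + 2 + 1 = 2 * u + 1 + 2 by ring] at h

end Moments

section LogConvex

variable {b : ℕ → ℝ} {N : ℕ} (h0 : b 0 = 1) (hnn : ∀ j ≤ N, 0 ≤ b j)
  (hconv : ∀ a, a + 2 ≤ N → b (a + 1) ^ 2 ≤ b a * b (a + 2))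
include h0 hnn hconv

theorem pow_succ_le_pow_of_sq_le_mul {j : ℕ} (hj : j + 1 ≤ N) : b j ^ (j + 1) ≤ b (j + 1) ^ j := by
  induction j with
  | zero => simp [h0]
  | succ j ih =>
    rcases (hnn (j + 1) (by omega)).eq_or_lt with hzero | hpos
    · rw [← hzero, zero_pow (by omega)]
      exact pow_nonneg (hnn _ hj) _
    refine le_of_mul_le_mul_left ?_ (pow_pos hpos j)
    calc b (j + 1) ^ j * b (j + 1) ^ (j + 2) = (b (j + 1) ^ 2) ^ (j + 1) := by ring
      _ ≤ (b j * b (j + 2)) ^ (j + 1) := pow_le_pow_left₀ (sq_nonneg _) (hconv j hj) _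
      _ = b j ^ (j + 1) * b (j + 2) ^ (j + 1) := mul_pow _ _ _
      _ ≤ b (j + 1) ^ j * b (j + 2) ^ (j + 1) :=
        mul_le_mul_of_nonneg_right (ih (by omega)) (pow_nonneg (hnn _ hj) _)

theorem pow_le_pow_of_sq_le_mul {r s : ℕ} (hr : 0 < r) (hrs : r ≤ s) (hs : s ≤ N) :
    b r ^ s ≤ b s ^ r := by
  induction s, hrs using Nat.le_induction with
  | base => rfl
  | succ s hrs ih =>
    have hbr := pow_nonneg (hnn r (by omega))
    have hbs := pow_nonneg (hnn s (by omega))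
    refine le_of_pow_le_pow_left₀ (by omega : s ≠ 0) (pow_nonneg (hnn _ hs) _) ?_
    calc (b r ^ (s + 1)) ^ s = (b r ^ s) ^ (s + 1) := by ring
      _ ≤ (b s ^ r) ^ (s + 1) := pow_le_pow_left₀ (hbr _) (ih (by omega)) _
      _ = (b s ^ (s + 1)) ^ r := by ring
      _ ≤ (b (s + 1) ^ s) ^ r :=
        pow_le_pow_left₀ (hbs _) (pow_succ_le_pow_of_sq_le_mul h0 hnn hconv hs) _
      _ = (b (s + 1) ^ r) ^ s := by ring

end LogConvex

theorem Real.rpow_div_le_of_pow_le_pow {x y : ℝ} {r s : ℕ} (hx : 0 ≤ x) (hy : 0 ≤ y) (hr : r ≠ 0)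
    (h : x ^ s ≤ y ^ r) : x ^ ((s : ℝ) / r) ≤ y :=
  calc x ^ ((s : ℝ) / r) = (x ^ s) ^ (r⁻¹ : ℝ) := by rw [div_eq_mul_inv, Real.rpow_natCast_mul hx]
    _ ≤ (y ^ r) ^ (r⁻¹ : ℝ) := Real.rpow_le_rpow (pow_nonneg hx _) h (by positivity)
    _ = y := Real.pow_rpow_inv_natCast hy hr

theorem pseudoexpectation_holder_general
    (n d c k : ℕ) (hc : 0 < c) (hk : 0 < k)
    (ℓ : ℕ) (hℓ : 10 * d * c * k ≤ ℓ)
    (E : MvPolynomial (Fin n) ℝ →ₗ[ℝ] ℝ)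
    (hE1 : E 1 = 1)
    (hEpos : ∀ R : MvPolynomial (Fin n) ℝ, R.totalDegree ≤ ℓ / 2 → 0 ≤ E (R ^ 2))
    (P : MvPolynomial (Fin n) ℝ) (hPdeg : P.totalDegree ≤ d)
    (m : ℕ) (R : Fin m → MvPolynomial (Fin n) ℝ) (hSOS : P = ∑ i, R i ^ 2) :
    0 ≤ E (P ^ (c * k)) ∧
      (E (P ^ (c * k))) ^ (((c : ℝ) + 1) / (c : ℝ)) ≤ E (P ^ ((c + 1) * k)) := by
  have hck : 0 < c * k := Nat.mul_pos hc hk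
  have hbudget : c * k * d + d ≤ ℓ / 2 := by
    have : 10 * d * c * k = 10 * (c * k * d) := by ring
    have : d ≤ c * k * d := Nat.le_mul_of_pos_left d hck
    omega
  have hR (i : Fin m) : (R i).totalDegree ≤ d := by
    have := two_mul_totalDegree_le_totalDegree_sum_sq R i
    rw [← hSOS] at this
    omega
  have hE (q : MvPolynomial (Fin n) ℝ) (hq : q.totalDegree ≤ c * k * d) : 0 ≤ E (q ^ 2) :=
    hEpos q (by omega)
  have hPE (q : MvPolynomial (Fin n) ℝ) (hq : q.totalDegree ≤ c * k * d) : 0 ≤ E (P * q ^ 2) :=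
    hSOS ▸ map_sum_sq_mul_sq_nonneg hEpos hR (by omega)
  have hN : (c + 1) * k * d ≤ 2 * (c * k * d) := by
    rw [← mul_assoc]
    exact Nat.mul_le_mul_right d (by nlinarith)
  have hnn (j : ℕ) (hj : j ≤ (c + 1) * k) := map_pow_nonneg hE hPE hPdeg hN hj
  have hconv (a : ℕ) (ha : a + 2 ≤ (c + 1) * k) := sq_map_pow_succ_le hE hPE hPdeg hN ha
  refine ⟨hnn _ (by nlinarith), ?_⟩
  rw [show ((c : ℝ) + 1) / c = (((c + 1) * k : ℕ) : ℝ) / (c * k : ℕ) by push_cast; field_simp]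
  exact Real.rpow_div_le_of_pow_le_pow (hnn _ (by nlinarith)) (hnn _ le_rfl) hck.ne'
    (pow_le_pow_of_sq_le_mul (b := fun j => E (P ^ j)) (by simpa using hE1) hnn hconv hck
      (by nlinarith) le_rfl)

/-- **Pseudoexpectation Hölder.**
Let `E` be a level-`ℓ` pseudoexpectation functional (linear, `E 1 = 1`,
`E (R²) ≥ 0` for all `R` of total degree at most `ℓ/2`) with `ℓ ≥ 10·d·c·k`,
and let `P` be a sum of squares of total degree at most `d`.  With `r = c·k`
and `r' = (c+1)·k`, we have `E (P^r) ≥ 0` and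
`E (P^{r'}) ≥ (E (P^r))^{r'/r} = (E (P^r))^{(c+1)/c}` (real power). -/
theorem pseudoexpectation_holder
    (n d c k : ℕ) (hn : 0 < n) (hd : 0 < d) (hc : 0 < c) (hk : 0 < k)
    (ℓ : ℕ) (hℓ : 10 * d * c * k ≤ ℓ)
    (E : MvPolynomial (Fin n) ℝ →ₗ[ℝ] ℝ)
    (hE1 : E 1 = 1)
    (hEpos : ∀ R : MvPolynomial (Fin n) ℝ, R.totalDegree ≤ ℓ / 2 → 0 ≤ E (R ^ 2))
    (P : MvPolynomial (Fin n) ℝ) (hPdeg : P.totalDegree ≤ d)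
    (m : ℕ) (R : Fin m → MvPolynomial (Fin n) ℝ) (hSOS : P = ∑ i, R i ^ 2) :
    0 ≤ E (P ^ (c * k)) ∧
      (E (P ^ (c * k))) ^ (((c : ℝ) + 1) / (c : ℝ)) ≤ E (P ^ ((c + 1) * k)) :=
  pseudoexpectation_holder_general n d c k hc hk ℓ hℓ E hE1 hEpos P hPdeg m R hSOS
end

section
/- Let n, m and ℓ be positive integers, let Ẽ_X be a level-ℓ pseudoexpectation functional on polynomials in x₁,…,xₙ and let Ẽ_Y be a level-ℓ pseudoexpectation functional on polynomials in y₁,…,y_m. Then there exists a level-ℓ pseudoexpectation functional Ẽ on polynomials in the n + m variables x₁,…,xₙ,y₁,…,y_m such that Ẽ(P(x)·Q(y)) = Ẽ_X(P) · Ẽ_Y(Q) for every polynomial P in the x-variables and every polynomial Q in the y-variables with deg(P) + deg(Q) ≤ ℓ. -/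
/-! Define `Ẽ` on monomials by `Ẽ(x^a y^b) = Ẽ_X(x^a) Ẽ_Y(y^b)` and extend linearly; it is then
multiplicative on all products `P(x) Q(y)`, whatever their degrees. Writing
`R = ∑_d c_d x^{a_d} y^{b_d}`, the value
`Ẽ(R²) = ∑_{d,e} c_d c_e Ẽ_X(x^{a_d} x^{a_e}) Ẽ_Y(y^{b_d} y^{b_e})` is a quadratic form in the
Hadamard product of two Gram matrices. Both are positive semidefinite because every `a_d` and `b_d`
has degree at most `deg R ≤ ℓ/2`, so the Schur product theorem gives `Ẽ(R²) ≥ 0`. -/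

namespace MvPolynomial

variable {σ τ : Type*}

theorem posSemidef_gram_of_sq_nonneg {ι : Type*} [Fintype ι] {k : ℕ}
    (E : MvPolynomial σ ℝ →ₗ[ℝ] ℝ) (hE : ∀ P : MvPolynomial σ ℝ, P.totalDegree ≤ k → 0 ≤ E (P ^ 2))
    (q : ι → MvPolynomial σ ℝ) (hq : ∀ i, (q i).totalDegree ≤ k) :
    (Matrix.of fun i j => E (q i * q j)).PosSemidef := by
  refine .of_dotProduct_mulVec_nonneg ?_ fun x => ?_
  · ext i j
    simp [mul_comm]
  · have hdeg : (∑ i, x i • q i).totalDegree ≤ k :=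
      totalDegree_finsetSum_le fun i _ => (totalDegree_smul_le _ _).trans (hq i)
    refine (hE _ hdeg).trans_eq ?_
    rw [sq, Finset.sum_mul_sum]
    simp only [smul_mul_smul_comm, map_sum, map_smul, smul_eq_mul,
      dotProduct, Matrix.mulVec, Matrix.of_apply, Finset.mul_sum, star_trivial]
    exact Finset.sum_congr rfl fun i _ => Finset.sum_congr rfl fun j _ => by ring

theorem monomial_eq_smul_monomial_one {R : Type*} [CommSemiring R] (s : σ →₀ ℕ) (c : R) :
    monomial s c = c • monomial s 1 := by
  rw [smul_monomial, smul_eq_mul, mul_one]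

theorem monomial_sumElim {R : Type*} [CommSemiring R] (a : σ →₀ ℕ) (b : τ →₀ ℕ) (c c' : R) :
    monomial (a.sumElim b) (c * c') =
      rename Sum.inl (monomial a c) * rename Sum.inr (monomial b c') := by
  rw [rename_monomial, rename_monomial, monomial_mul, Finsupp.sumElim_eq_add]

section productFunctional

variable {R : Type*} [CommSemiring R]
  (EX : MvPolynomial σ R →ₗ[R] R) (EY : MvPolynomial τ R →ₗ[R] R)

noncomputable def productFunctional : MvPolynomial (σ ⊕ τ) R →ₗ[R] R :=
  (basisMonomials (σ ⊕ τ) R).constr R fun d =>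
    EX (monomial (Finsupp.sumFinsuppAddEquivProdFinsupp d).1 1) *
      EY (monomial (Finsupp.sumFinsuppAddEquivProdFinsupp d).2 1)

theorem productFunctional_monomial (d : σ ⊕ τ →₀ ℕ) (c : R) :
    productFunctional EX EY (monomial d c) =
      c * (EX (monomial (Finsupp.sumFinsuppAddEquivProdFinsupp d).1 1) *
        EY (monomial (Finsupp.sumFinsuppAddEquivProdFinsupp d).2 1)) := by
  rw [monomial_eq_smul_monomial_one, map_smul, smul_eq_mul, productFunctional,
    ← congrFun (coe_basisMonomials (σ ⊕ τ) R) d, Module.Basis.constr_basis]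

theorem productFunctional_monomial_sumElim (a : σ →₀ ℕ) (b : τ →₀ ℕ) (c : R) :
    productFunctional EX EY (monomial (a.sumElim b) c) =
      c * (EX (monomial a 1) * EY (monomial b 1)) := by
  rw [productFunctional_monomial, ← Finsupp.sumFinsuppAddEquivProdFinsupp_symm_apply (a, b),
    AddEquiv.apply_symm_apply]

theorem productFunctional_rename_mul_rename (P : MvPolynomial σ R) (Q : MvPolynomial τ R) :
    productFunctional EX EY (rename Sum.inl P * rename Sum.inr Q) = EX P * EY Q := by
  induction P using MvPolynomial.induction_on' with
  | monomial a c =>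
    induction Q using MvPolynomial.induction_on' with
    | monomial b c' =>
      rw [← monomial_sumElim, productFunctional_monomial_sumElim,
        monomial_eq_smul_monomial_one a c, monomial_eq_smul_monomial_one b c', map_smul, map_smul,
        smul_eq_mul, smul_eq_mul]
      ring
    | add Q₁ Q₂ h₁ h₂ => rw [map_add, mul_add, map_add, h₁, h₂, map_add, mul_add]
  | add P₁ P₂ h₁ h₂ => rw [map_add, add_mul, map_add, h₁, h₂, map_add, add_mul]

end productFunctional

section sq_nonneg

variable {k : ℕ} {EX : MvPolynomial σ ℝ →ₗ[ℝ] ℝ} {EY : MvPolynomial τ ℝ →ₗ[ℝ] ℝ}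

theorem productFunctional_sq_sum_nonneg
    (hEX : ∀ P : MvPolynomial σ ℝ, P.totalDegree ≤ k → 0 ≤ EX (P ^ 2))
    (hEY : ∀ Q : MvPolynomial τ ℝ, Q.totalDegree ≤ k → 0 ≤ EY (Q ^ 2))
    {ι : Type*} [Fintype ι] (p : ι → MvPolynomial σ ℝ) (q : ι → MvPolynomial τ ℝ)
    (hp : ∀ i, (p i).totalDegree ≤ k) (hq : ∀ i, (q i).totalDegree ≤ k) :
    0 ≤ productFunctional EX EY ((∑ i, rename Sum.inl (p i) * rename Sum.inr (q i)) ^ 2) := by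
  have hschur := (posSemidef_gram_of_sq_nonneg EX hEX p hp).hadamard
    (posSemidef_gram_of_sq_nonneg EY hEY q hq)
  refine (hschur.dotProduct_mulVec_nonneg 1).trans_eq ?_
  rw [sq, Finset.sum_mul_sum]
  simp_rw [mul_mul_mul_comm _ (rename Sum.inr _), ← map_mul]
  simp only [map_sum, productFunctional_rename_mul_rename, dotProduct, Matrix.mulVec,
    Matrix.hadamard_apply, Matrix.of_apply, Pi.one_apply, star_one, one_mul, mul_one]

theorem productFunctional_sq_nonneg
    (hEX : ∀ P : MvPolynomial σ ℝ, P.totalDegree ≤ k → 0 ≤ EX (P ^ 2))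
    (hEY : ∀ Q : MvPolynomial τ ℝ, Q.totalDegree ≤ k → 0 ≤ EY (Q ^ 2))
    (R : MvPolynomial (σ ⊕ τ) ℝ) (hR : R.totalDegree ≤ k) :
    0 ≤ productFunctional EX EY (R ^ 2) := by
  set split := Finsupp.sumFinsuppAddEquivProdFinsupp (M := ℕ) (α := σ) (β := τ)
  have hdecomp : R = ∑ d : R.support,
      rename Sum.inl (monomial (split d).1 (coeff d R)) *
        rename Sum.inr (monomial (split d).2 1) := by
    conv_lhs => rw [R.as_sum, ← Finset.sum_coe_sort]
    refine Finset.sum_congr rfl fun d _ => ?_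
    rw [← monomial_sumElim, ← Finsupp.sumFinsuppAddEquivProdFinsupp_symm_apply,
      AddEquiv.symm_apply_apply, mul_one]
  have hdeg (d : R.support) :
      ((split d).1.sum fun _ e => e) + ((split d).2.sum fun _ e => e) ≤ k := by
    refine le_of_eq_of_le ?_ ((le_totalDegree d.2).trans hR)
    conv_rhs => rw [← split.symm_apply_apply d, Finsupp.sumFinsuppAddEquivProdFinsupp_symm_apply,
      Finsupp.sum_sumElim]
    rfl
  rw [hdecomp]
  exact productFunctional_sq_sum_nonneg hEX hEY _ _
    (fun d => (totalDegree_monomial_le _ _).trans (le_of_add_le_left (hdeg d)))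
    (fun d => (totalDegree_monomial_le _ _).trans (le_of_add_le_right (hdeg d)))

end sq_nonneg

end MvPolynomial

open MvPolynomial in
theorem pseudoexpectation_product_general
    (n m ℓ : ℕ)
    (EX : MvPolynomial (Fin n) ℝ →ₗ[ℝ] ℝ)
    (hEX1 : EX 1 = 1)
    (hEXpos : ∀ P : MvPolynomial (Fin n) ℝ, P.totalDegree ≤ ℓ / 2 → 0 ≤ EX (P ^ 2))
    (EY : MvPolynomial (Fin m) ℝ →ₗ[ℝ] ℝ)
    (hEY1 : EY 1 = 1)
    (hEYpos : ∀ Q : MvPolynomial (Fin m) ℝ, Q.totalDegree ≤ ℓ / 2 → 0 ≤ EY (Q ^ 2)) :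
    ∃ E : MvPolynomial (Fin n ⊕ Fin m) ℝ →ₗ[ℝ] ℝ,
      E 1 = 1 ∧
      (∀ R : MvPolynomial (Fin n ⊕ Fin m) ℝ, R.totalDegree ≤ ℓ / 2 → 0 ≤ E (R ^ 2)) ∧
      ∀ (P : MvPolynomial (Fin n) ℝ) (Q : MvPolynomial (Fin m) ℝ),
        P.totalDegree + Q.totalDegree ≤ ℓ →
        E (MvPolynomial.rename Sum.inl P * MvPolynomial.rename Sum.inr Q)
          = EX P * EY Q := by
  refine ⟨productFunctional EX EY, ?_, productFunctional_sq_nonneg hEXpos hEYpos,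
    fun P Q _ => productFunctional_rename_mul_rename EX EY P Q⟩
  simpa [hEX1, hEY1] using productFunctional_rename_mul_rename EX EY 1 1

/-- **Independent product of pseudodistributions.**
Given level-`ℓ` pseudoexpectation functionals `EX` on polynomials in `x₁,…,xₙ`
and `EY` on polynomials in `y₁,…,y_m`, there is a level-`ℓ` pseudoexpectation
functional `E` on polynomials in the `n + m` variables (modelled via `Fin n ⊕ Fin m`)
with `E (P(x)·Q(y)) = EX P · EY Q` whenever `deg P + deg Q ≤ ℓ`. -/
theorem pseudoexpectation_product
    (n m ℓ : ℕ) (hn : 0 < n) (hm : 0 < m) (hℓ : 0 < ℓ)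
    (EX : MvPolynomial (Fin n) ℝ →ₗ[ℝ] ℝ)
    (hEX1 : EX 1 = 1)
    (hEXpos : ∀ P : MvPolynomial (Fin n) ℝ, P.totalDegree ≤ ℓ / 2 → 0 ≤ EX (P ^ 2))
    (EY : MvPolynomial (Fin m) ℝ →ₗ[ℝ] ℝ)
    (hEY1 : EY 1 = 1)
    (hEYpos : ∀ Q : MvPolynomial (Fin m) ℝ, Q.totalDegree ≤ ℓ / 2 → 0 ≤ EY (Q ^ 2)) :
    ∃ E : MvPolynomial (Fin n ⊕ Fin m) ℝ →ₗ[ℝ] ℝ,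
      E 1 = 1 ∧
      (∀ R : MvPolynomial (Fin n ⊕ Fin m) ℝ, R.totalDegree ≤ ℓ / 2 → 0 ≤ E (R ^ 2)) ∧
      ∀ (P : MvPolynomial (Fin n) ℝ) (Q : MvPolynomial (Fin m) ℝ),
        P.totalDegree + Q.totalDegree ≤ ℓ →
        E (MvPolynomial.rename Sum.inl P * MvPolynomial.rename Sum.inr Q)
          = EX P * EY Q :=
  pseudoexpectation_product_general n m ℓ EX hEX1 hEXpos EY hEY1 hEYpos
end

section
/- Let X and Y be jointly distributed random variables taking values in finite sets A and B respectively, with joint probability mass function p on A×B and marginals p_X on A and p_Y on B. Then 2·d_H(p, p_X ⊗ p_Y)² ≤ I(X;Y), i.e., 2·(1 − Σ_{(a,b)} √(p(a,b)·p_X(a)·p_Y(b))) ≤ H(X) + H(Y) − H(X,Y). -/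
/-!
Writing `q = p_X ⊗ p_Y`, the mutual information is the Kullback–Leibler divergence
`Σ p (log p - log q)`. Termwise, `log √(q/p) ≤ √(q/p) - 1` multiplied by `2p` gives
`2 (p - √(p q)) ≤ p (log p - log q)`, and summing over `A × B` with `Σ p = 1` yields
`2 d_H(p, q)² ≤ KL(p ‖ q)`. Terms with `q = 0` also have `p = 0`, because
`p(a,b) ≤ p_X(a)` and `p(a,b) ≤ p_Y(b)`.
-/

open Real Finset

theorem two_mul_sub_sqrt_mul_le_mul_log_sub {p q : ℝ} (hp : 0 ≤ p) (hq : 0 ≤ q)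
    (hpq : q = 0 → p = 0) : 2 * (p - √(p * q)) ≤ p * (log p - log q) := by
  rcases hp.eq_or_lt with rfl | hp
  · simp
  have hq : 0 < q := hq.lt_of_ne fun h => hp.ne' (hpq h.symm)
  have hlog : log (q / p) ≤ 2 * (√(q / p) - 1) := by
    have h := log_le_sub_one_of_pos (sqrt_pos.mpr (div_pos hq hp))
    rw [log_sqrt (div_pos hq hp).le] at h
    linarith
  have hsqrt : √(p * q) = p * √(q / p) := by
    rw [show p * q = p ^ 2 * (q / p) by field_simp, sqrt_mul (sq_nonneg p), sqrt_sq hp.le]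
  rw [log_div hq.ne' hp.ne'] at hlog
  rw [hsqrt]
  nlinarith [mul_le_mul_of_nonneg_left hlog hp.le]

theorem two_mul_one_sub_sum_sqrt_le_sum_mul_log_sub {ι : Type*} [Fintype ι] (p q : ι → ℝ)
    (hp : ∀ i, 0 ≤ p i) (hq : ∀ i, 0 ≤ q i) (hpq : ∀ i, q i = 0 → p i = 0)
    (hp1 : ∑ i, p i = 1) :
    2 * (1 - ∑ i, √(p i * q i)) ≤ ∑ i, p i * (log (p i) - log (q i)) :=
  calc 2 * (1 - ∑ i, √(p i * q i)) = ∑ i, 2 * (p i - √(p i * q i)) := by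
        rw [← mul_sum, sum_sub_distrib, hp1]
    _ ≤ _ := sum_le_sum fun i _ =>
        two_mul_sub_sqrt_mul_le_mul_log_sub (hp i) (hq i) (hpq i)

section Marginals

theorem le_sum_fst_marginal {A B : Type*} [Fintype B] {p : A × B → ℝ}
    (hp : ∀ x, 0 ≤ p x) (x : A × B) : p x ≤ ∑ b, p (x.1, b) :=
  single_le_sum (f := fun b => p (x.1, b)) (fun _ _ => hp _) (mem_univ x.2)

theorem le_sum_snd_marginal {A B : Type*} [Fintype A] {p : A × B → ℝ}
    (hp : ∀ x, 0 ≤ p x) (x : A × B) : p x ≤ ∑ a, p (a, x.2) :=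
  single_le_sum (f := fun a => p (a, x.2)) (fun _ _ => hp _) (mem_univ x.1)

variable {A B : Type*} [Fintype A] [Fintype B]

theorem sum_fst_marginal_mul (p : A × B → ℝ) (g : A → ℝ) :
    ∑ a, (∑ b, p (a, b)) * g a = ∑ x, p x * g x.1 := by
  simp only [Fintype.sum_prod_type, sum_mul]

theorem sum_snd_marginal_mul (p : A × B → ℝ) (g : B → ℝ) :
    ∑ b, (∑ a, p (a, b)) * g b = ∑ x, p x * g x.2 := by
  simp only [Fintype.sum_prod_type_right, sum_mul]

theorem sum_mul_log_sub_log_marginals {p : A × B → ℝ} (hp : ∀ x, 0 ≤ p x) :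
    ∑ x, p x * (log (p x) - log ((∑ b, p (x.1, b)) * ∑ a, p (a, x.2)))
      = (-∑ a, (∑ b, p (a, b)) * log (∑ b, p (a, b)))
        + (-∑ b, (∑ a, p (a, b)) * log (∑ a, p (a, b)))
        - (-∑ x, p x * log (p x)) := by
  have hsplit : ∀ x, p x * log ((∑ b, p (x.1, b)) * ∑ a, p (a, x.2))
      = p x * log (∑ b, p (x.1, b)) + p x * log (∑ a, p (a, x.2)) := by
    intro x
    rcases (hp x).eq_or_lt with h0 | hpos
    · simp [← h0]
    rw [log_mul (hpos.trans_le (le_sum_fst_marginal hp x)).ne'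
      (hpos.trans_le (le_sum_snd_marginal hp x)).ne', mul_add]
  simp only [sum_fst_marginal_mul, sum_snd_marginal_mul, mul_sub, hsplit, sum_sub_distrib,
    sum_add_distrib]
  ring

end Marginals

/-- **Hellinger distance vs. mutual information** (Lemma 2.2).
For jointly distributed finite random variables `X, Y` with joint pmf `p`,
marginals `pX, pY`, and entropy taken with the natural logarithm:
`2·d_H(p, pX ⊗ pY)² = 2·(1 − Σ √(p(a,b)·pX(a)·pY(b))) ≤ I(X;Y) = H(X) + H(Y) − H(X,Y)`. -/
theorem hellinger_le_mutualInformation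
    (A B : Type) [Fintype A] [Fintype B]
    (p : A × B → ℝ) (hp : ∀ x, 0 ≤ p x) (hp1 : ∑ x, p x = 1)
    (pX : A → ℝ) (hpX : ∀ a, pX a = ∑ b, p (a, b))
    (pY : B → ℝ) (hpY : ∀ b, pY b = ∑ a, p (a, b)) :
    2 * (1 - ∑ x : A × B, Real.sqrt (p x * (pX x.1 * pY x.2)))
      ≤ (-∑ a, pX a * Real.log (pX a)) + (-∑ b, pY b * Real.log (pY b))
        - (-∑ x, p x * Real.log (p x)) := by
  obtain rfl : pX = _ := funext hpX
  obtain rfl : pY = _ := funext hpY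
  beta_reduce
  rw [← sum_mul_log_sub_log_marginals hp]
  refine two_mul_one_sub_sum_sqrt_le_sum_mul_log_sub p _ hp
    (fun x => mul_nonneg (sum_nonneg fun _ _ => hp _) (sum_nonneg fun _ _ => hp _))
    (fun x hx => ?_) hp1
  rcases mul_eq_zero.mp hx with h | h
  · exact le_antisymm (h ▸ le_sum_fst_marginal hp x) (hp x)
  · exact le_antisymm (h ▸ le_sum_snd_marginal hp x) (hp x)
end

section
/- Let t ≥ 1 and let A₁,…,A_t be jointly distributed random variables taking values in a finite set, whose joint distribution is exchangeable (invariant under every permutation of the t coordinates). Let ε > 0. If the Hellinger distance between the joint distribution of (A₁,…,A_t) and the t-fold product of the common marginal distribution is at least ε, then H(A_t | A₁,…,A_{t−1}) ≤ H(A₁) − 2ε²/t². -/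
/-!
Write `q` for the common marginal and `r` for the law of the first `t - 1` coordinates. The
quantity `H(q) - H(A_t | A_1 … A_{t-1}) = H(q) + H(r) - H(p)` is the Kullback–Leibler divergence of
`p` from `r ⊗ q`, which dominates twice the squared Hellinger distance (`log x ≤ x - 1` at
`x = √(b/a)`). It remains to show `d_H(p, q^{⊗t}) ≤ t · d_H(p, r ⊗ q)`. Hellinger distance is the
Euclidean distance of square-root vectors, so by the triangle inequality through `r ⊗ q` it suffices
to bound `d_H(r ⊗ q, q^{⊗t}) = d_H(r, q^{⊗(t-1)})`. By induction on `t` (`r` is again exchangeable,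
with marginal `q`) this is at most `(t - 1) · d_H(r, r' ⊗ q)`, where `r'` is the law of the first
`t - 2` coordinates. Forgetting the penultimate coordinate maps `p` to `r` (exchangeability) and
`r ⊗ q` to `r' ⊗ q`, so data processing gives `d_H(r, r' ⊗ q) ≤ d_H(p, r ⊗ q)`.
-/

open Finset Real

section Distributions

variable {I J : Type*} [Fintype I] [DecidableEq J]

def pushforward (φ : I → J) (u : I → ℝ) (j : J) : ℝ := ∑ i, if φ i = j then u i else 0

lemma pushforward_eq_sum_filter (φ : I → J) (u : I → ℝ) (j : J) :
    pushforward φ u j = ∑ i with φ i = j, u i :=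
  (sum_filter _ _).symm

lemma pushforward_nonneg {u : I → ℝ} (hu : ∀ i, 0 ≤ u i) (φ : I → J) (j : J) :
    0 ≤ pushforward φ u j :=
  sum_nonneg fun i _ => by split_ifs <;> simp [hu i]

lemma sum_pushforward [Fintype J] (φ : I → J) (u : I → ℝ) :
    ∑ j, pushforward φ u j = ∑ i, u i := by
  simp_rw [pushforward_eq_sum_filter, sum_fiberwise]

lemma le_pushforward_apply {u : I → ℝ} (hu : ∀ i, 0 ≤ u i) (φ : I → J) (i : I) :
    u i ≤ pushforward φ u (φ i) := by
  rw [pushforward_eq_sum_filter]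
  exact single_le_sum (fun i _ => hu i) (by simp)

lemma sum_mul_comp_eq_sum_pushforward [Fintype J] (φ : I → J) (u : I → ℝ) (F : J → ℝ) :
    ∑ i, u i * F (φ i) = ∑ j, pushforward φ u j * F j := by
  rw [← sum_fiberwise univ φ]
  refine sum_congr rfl fun j _ => ?_
  rw [pushforward_eq_sum_filter, sum_mul]
  exact sum_congr rfl fun i hi => by rw [(mem_filter.1 hi).2]

lemma pushforward_pushforward [Fintype J] {K : Type*} [DecidableEq K] (φ : I → J) (ψ : J → K)
    (u : I → ℝ) : pushforward ψ (pushforward φ u) = pushforward (ψ ∘ φ) u := by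
  ext k
  simpa [pushforward] using
    (sum_mul_comp_eq_sum_pushforward φ u fun j => if ψ j = k then (1 : ℝ) else 0).symm

def IsProbVec (u : I → ℝ) : Prop := (∀ i, 0 ≤ u i) ∧ ∑ i, u i = 1

lemma IsProbVec.pushforward [Fintype J] {u : I → ℝ} (hu : IsProbVec u) (φ : I → J) :
    IsProbVec (pushforward φ u) :=
  ⟨pushforward_nonneg hu.1 φ, (sum_pushforward φ u).trans hu.2⟩

end Distributions

noncomputable section Hellinger

variable {I J : Type*} [Fintype I]

def bhattacharyya (u v : I → ℝ) : ℝ := ∑ i, √(u i * v i)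

def hellinger (u v : I → ℝ) : ℝ := √(1 - bhattacharyya u v)

lemma bhattacharyya_le_pushforward [Fintype J] [DecidableEq J] {u v : I → ℝ}
    (hu : ∀ i, 0 ≤ u i) (hv : ∀ i, 0 ≤ v i) (φ : I → J) :
    bhattacharyya u v ≤ bhattacharyya (pushforward φ u) (pushforward φ v) := by
  rw [bhattacharyya, bhattacharyya, ← sum_fiberwise univ φ]
  refine sum_le_sum fun j _ => ?_
  rw [pushforward_eq_sum_filter, pushforward_eq_sum_filter, sqrt_mul (sum_nonneg fun i _ => hu i)]
  simp_rw [sqrt_mul (hu _)]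
  exact sum_sqrt_mul_sqrt_le _ hu hv

lemma hellinger_pushforward_le [Fintype J] [DecidableEq J] {u v : I → ℝ}
    (hu : ∀ i, 0 ≤ u i) (hv : ∀ i, 0 ≤ v i) (φ : I → J) :
    hellinger (pushforward φ u) (pushforward φ v) ≤ hellinger u v :=
  sqrt_le_sqrt (by linarith [bhattacharyya_le_pushforward hu hv φ])

lemma bhattacharyya_le_one {u v : I → ℝ} (hu : IsProbVec u) (hv : IsProbVec v) :
    bhattacharyya u v ≤ 1 := by
  have := sum_sqrt_mul_sqrt_le univ hu.1 hv.1
  simpa [bhattacharyya, sqrt_mul (hu.1 _), hu.2, hv.2] using this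

lemma hellinger_sq {u v : I → ℝ} (hu : IsProbVec u) (hv : IsProbVec v) :
    hellinger u v ^ 2 = 1 - bhattacharyya u v :=
  sq_sqrt (by linarith [bhattacharyya_le_one hu hv])

def sqrtVec (u : I → ℝ) : EuclideanSpace ℝ I := WithLp.toLp 2 fun i => √(u i)

lemma dist_sqrtVec {u v : I → ℝ} (hu : IsProbVec u) (hv : IsProbVec v) :
    dist (sqrtVec u) (sqrtVec v) = √2 * hellinger u v := by
  have hcoord (i : I) : dist (√(u i)) (√(v i)) ^ 2 = u i + v i - 2 * √(u i * v i) := by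
    rw [dist_eq, sq_abs, sub_sq, sq_sqrt (hu.1 i), sq_sqrt (hv.1 i), sqrt_mul (hu.1 i)]
    ring
  rw [EuclideanSpace.dist_eq, hellinger, ← sqrt_mul zero_le_two]
  simp only [sqrtVec, hcoord]
  rw [sum_sub_distrib, sum_add_distrib, hu.2, hv.2, ← mul_sum, bhattacharyya]
  ring_nf

lemma hellinger_triangle {u v w : I → ℝ} (hu : IsProbVec u) (hv : IsProbVec v)
    (hw : IsProbVec w) : hellinger u w ≤ hellinger u v + hellinger v w := by
  have := dist_triangle (sqrtVec u) (sqrtVec v) (sqrtVec w)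
  rw [dist_sqrtVec hu hw, dist_sqrtVec hu hv, dist_sqrtVec hv hw, ← mul_add] at this
  exact le_of_mul_le_mul_left this (by positivity)

lemma two_mul_sub_two_mul_sqrt_mul_le {a b : ℝ} (ha : 0 < a) (hb : 0 < b) :
    2 * a - 2 * √(a * b) ≤ a * log a - a * log b := by
  have hlog : log b - log a = 2 * log √(b / a) := by
    rw [log_sqrt (by positivity), log_div hb.ne' ha.ne']; ring
  have hsqrt : a * √(b / a) = √(a * b) := by
    rw [← sqrt_sq ha.le, ← sqrt_mul (sq_nonneg a), sqrt_sq ha.le]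
    congr 1
    field_simp
  nlinarith [mul_le_mul_of_nonneg_left (log_le_sub_one_of_pos (sqrt_pos.2 (div_pos hb ha)))
    (by positivity : 0 ≤ 2 * a)]

lemma two_mul_one_sub_bhattacharyya_le {u v : I → ℝ} (hu : IsProbVec u)
    (hv : ∀ i, u i ≠ 0 → 0 < v i) :
    2 * (1 - bhattacharyya u v) ≤ ∑ i, u i * log (u i) - ∑ i, u i * log (v i) := by
  rw [← hu.2, mul_sub, mul_sum, bhattacharyya, mul_sum, ← sum_sub_distrib, ← sum_sub_distrib]
  refine sum_le_sum fun i _ => ?_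
  rcases (hu.1 i).eq_or_lt with hui | hui
  · simp [← hui]
  · exact two_mul_sub_two_mul_sqrt_mul_le hui (hv i hui.ne')

end Hellinger

section Snoc

variable {A : Type*} {n : ℕ}

lemma sum_snoc [Fintype A] (F : (Fin (n + 1) → A) → ℝ) :
    ∑ f, F f = ∑ g : Fin n → A, ∑ a, F (Fin.snoc g a) := by
  rw [← (Fin.snocEquiv fun _ => A).sum_comp F, Fintype.sum_prod_type, sum_comm]
  rfl

def snocProd (u : (Fin n → A) → ℝ) (v : A → ℝ) (f : Fin (n + 1) → A) : ℝ :=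
  u (Fin.init f) * v (f (Fin.last n))

@[simp]
lemma snocProd_snoc (u : (Fin n → A) → ℝ) (v : A → ℝ) (g : Fin n → A) (a : A) :
    snocProd u v (Fin.snoc g a) = u g * v a := by
  simp [snocProd]

lemma snocProd_nonneg {u : (Fin n → A) → ℝ} {v : A → ℝ} (hu : ∀ g, 0 ≤ u g) (hv : ∀ a, 0 ≤ v a)
    (f : Fin (n + 1) → A) : 0 ≤ snocProd u v f :=
  mul_nonneg (hu _) (hv _)

lemma sum_snocProd [Fintype A] (u : (Fin n → A) → ℝ) (v : A → ℝ) :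
    ∑ f, snocProd u v f = (∑ g, u g) * ∑ a, v a := by
  simp_rw [sum_snoc (snocProd u v), snocProd_snoc, sum_mul_sum]

lemma bhattacharyya_snocProd [Fintype A] {u u' : (Fin n → A) → ℝ} (hu : ∀ g, 0 ≤ u g)
    (hu' : ∀ g, 0 ≤ u' g) (v v' : A → ℝ) :
    bhattacharyya (snocProd u v) (snocProd u' v') = bhattacharyya u u' * bhattacharyya v v' := by
  simp_rw [bhattacharyya, sum_snoc fun f => √(snocProd u v f * snocProd u' v' f), snocProd_snoc,
    sum_mul_sum, ← sqrt_mul (mul_nonneg (hu _) (hu' _))]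
  exact sum_congr rfl fun g _ => sum_congr rfl fun a _ => by ring_nf

lemma hellinger_snocProd_right [Fintype A] {u u' : (Fin n → A) → ℝ} {v : A → ℝ}
    (hu : ∀ g, 0 ≤ u g) (hu' : ∀ g, 0 ≤ u' g) (hv : IsProbVec v) :
    hellinger (snocProd u v) (snocProd u' v) = hellinger u u' := by
  have hvv : bhattacharyya v v = 1 := by
    simp_rw [bhattacharyya, sqrt_mul_self (hv.1 _), hv.2]
  rw [hellinger, hellinger, bhattacharyya_snocProd hu hu', hvv, mul_one]

lemma pushforward_snocProd [Fintype A] [DecidableEq A] {m : ℕ} (ψ : (Fin n → A) → (Fin m → A))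
    (u : (Fin n → A) → ℝ) (v : A → ℝ) :
    pushforward (fun f => (Fin.snoc (ψ (Fin.init f)) (f (Fin.last n)) : Fin (m + 1) → A))
      (snocProd u v) = snocProd (pushforward ψ u) v := by
  ext h
  obtain ⟨g', b, rfl⟩ : ∃ g' b, h = Fin.snoc g' b := ⟨_, _, (Fin.snoc_init_self h).symm⟩
  rw [snocProd_snoc, pushforward, sum_snoc, pushforward, sum_mul]
  refine sum_congr rfl fun g _ => ?_
  simp [Fin.snoc_inj, ite_and]

def piPow (q : A → ℝ) (n : ℕ) (f : Fin n → A) : ℝ := ∏ i, q (f i)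

lemma piPow_succ (q : A → ℝ) (n : ℕ) : piPow q (n + 1) = snocProd (piPow q n) q := by
  ext f
  simp [piPow, snocProd, Fin.prod_univ_castSucc, Fin.init]

lemma piPow_nonneg {q : A → ℝ} (hq : ∀ a, 0 ≤ q a) (n : ℕ) (f : Fin n → A) : 0 ≤ piPow q n f :=
  prod_nonneg fun _ _ => hq _

lemma IsProbVec.snocProd [Fintype A] {u : (Fin n → A) → ℝ} {v : A → ℝ} (hu : IsProbVec u)
    (hv : IsProbVec v) : IsProbVec (snocProd u v) :=
  ⟨snocProd_nonneg hu.1 hv.1, by rw [sum_snocProd, hu.2, hv.2, one_mul]⟩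

lemma sum_piPow [Fintype A] [DecidableEq A] (q : A → ℝ) (n : ℕ) :
    ∑ f, piPow q n f = (∑ a, q a) ^ n := by
  simp [piPow, ← Fintype.prod_sum]

lemma IsProbVec.piPow [Fintype A] [DecidableEq A] {q : A → ℝ} (hq : IsProbVec q) (n : ℕ) :
    IsProbVec (piPow q n) :=
  ⟨piPow_nonneg hq.1 n, by rw [sum_piPow, hq.2, one_pow]⟩

end Snoc

section Exchangeable

variable {A : Type*} {n : ℕ}

def IsExchangeable (p : (Fin n → A) → ℝ) : Prop := ∀ (σ : Equiv.Perm (Fin n)) f, p (f ∘ σ) = p f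

lemma IsExchangeable.pushforward_comp_perm [Fintype A] [DecidableEq A] {p : (Fin n → A) → ℝ}
    (hp : IsExchangeable p) {J : Type*} [DecidableEq J] (ψ : (Fin n → A) → J)
    (σ : Equiv.Perm (Fin n)) : pushforward (fun f => ψ (f ∘ σ)) p = pushforward ψ p := by
  ext j
  refine Fintype.sum_equiv (σ.symm.arrowCongr (Equiv.refl A)) _ _ fun f => ?_
  change _ = if ψ (f ∘ σ) = j then p (f ∘ σ) else 0
  rw [hp]

lemma IsExchangeable.pushforward_eval [Fintype A] [DecidableEq A] {p : (Fin n → A) → ℝ}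
    (hp : IsExchangeable p) (i j : Fin n) :
    pushforward (fun f => f i) p = pushforward (fun f => f j) p := by
  rw [← hp.pushforward_comp_perm _ (Equiv.swap i j)]
  simp

def Equiv.Perm.extendLast (σ : Equiv.Perm (Fin n)) : Equiv.Perm (Fin (n + 1)) :=
  finSuccEquivLast.symm.permCongr σ.optionCongr

lemma Fin.snoc_comp_extendLast (σ : Equiv.Perm (Fin n)) (g : Fin n → A) (a : A) :
    (Fin.snoc g a : Fin (n + 1) → A) ∘ σ.extendLast = Fin.snoc (g ∘ σ) a := by
  funext i
  induction i using Fin.lastCases with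
  | last => simp [Equiv.Perm.extendLast, Equiv.permCongr_apply, finSuccEquivLast_last]
  | cast j => simp [Equiv.Perm.extendLast, Equiv.permCongr_apply, finSuccEquivLast_castSucc]

lemma Fin.init_comp_swap {n : ℕ} (f : Fin (n + 2) → A) :
    Fin.init (f ∘ Equiv.swap (Fin.castSucc (Fin.last n)) (Fin.last (n + 1))) =
      Fin.snoc (Fin.init (Fin.init f)) (f (Fin.last (n + 1))) := by
  funext i
  induction i using Fin.lastCases with
  | last => simp [Fin.init]
  | cast j =>
    simp only [Fin.init, Function.comp_apply, Fin.snoc_castSucc]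
    rw [Equiv.swap_apply_of_ne_of_ne] <;> simp [Fin.ext_iff] <;> omega

lemma pushforward_init_apply [Fintype A] [DecidableEq A] (p : (Fin (n + 1) → A) → ℝ)
    (g : Fin n → A) : pushforward Fin.init p g = ∑ a, p (Fin.snoc g a) := by
  rw [pushforward, sum_snoc]
  simp_rw [Fin.init_snoc (α := fun _ => A)]
  rw [Fintype.sum_eq_single g fun g' hg' => by simp [hg']]
  simp

lemma IsExchangeable.pushforward_init [Fintype A] [DecidableEq A] {p : (Fin (n + 1) → A) → ℝ}
    (hp : IsExchangeable p) : IsExchangeable (pushforward Fin.init p) := by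
  intro σ g
  simp_rw [pushforward_init_apply, ← Fin.snoc_comp_extendLast, hp _ _]

end Exchangeable

section Decoupling

variable {A : Type*} [Fintype A] [DecidableEq A] {n : ℕ}

def firstMarginal (p : (Fin (n + 1) → A) → ℝ) : A → ℝ := pushforward (fun f => f 0) p

def initMarginal (p : (Fin (n + 1) → A) → ℝ) : (Fin n → A) → ℝ := pushforward Fin.init p

def decoupleLast (p : (Fin (n + 1) → A) → ℝ) : (Fin (n + 1) → A) → ℝ :=
  snocProd (initMarginal p) (firstMarginal p)

lemma IsProbVec.firstMarginal {p : (Fin (n + 1) → A) → ℝ} (hp : IsProbVec p) :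
    IsProbVec (firstMarginal p) :=
  hp.pushforward _

lemma IsProbVec.initMarginal {p : (Fin (n + 1) → A) → ℝ} (hp : IsProbVec p) :
    IsProbVec (initMarginal p) :=
  hp.pushforward _

lemma IsProbVec.decoupleLast {p : (Fin (n + 1) → A) → ℝ} (hp : IsProbVec p) :
    IsProbVec (decoupleLast p) :=
  hp.initMarginal.snocProd hp.firstMarginal

lemma firstMarginal_initMarginal (p : (Fin (n + 2) → A) → ℝ) :
    firstMarginal (initMarginal p) = firstMarginal p :=
  pushforward_pushforward _ _ p

lemma hellinger_decoupleLast_initMarginal_le {p : (Fin (n + 2) → A) → ℝ} (hp : IsProbVec p)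
    (hexch : IsExchangeable p) :
    hellinger (initMarginal p) (decoupleLast (initMarginal p)) ≤
      hellinger p (decoupleLast p) := by
  let forgetPenult (f : Fin (n + 2) → A) : Fin (n + 1) → A :=
    Fin.snoc (Fin.init (Fin.init f)) (f (Fin.last (n + 1)))
  have hp' : pushforward forgetPenult p = initMarginal p := by
    simp_rw [forgetPenult, ← Fin.init_comp_swap]
    exact hexch.pushforward_comp_perm _ _
  have hN : pushforward forgetPenult (decoupleLast p) = decoupleLast (initMarginal p) := by
    rw [decoupleLast, decoupleLast, firstMarginal_initMarginal]
    exact pushforward_snocProd _ _ _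
  rw [← hN, ← hp']
  exact hellinger_pushforward_le hp.1 hp.decoupleLast.1 _

lemma hellinger_piPow_le_mul_hellinger_decoupleLast :
    ∀ (n : ℕ) {p : (Fin (n + 1) → A) → ℝ}, IsProbVec p → IsExchangeable p →
      hellinger p (piPow (firstMarginal p) (n + 1)) ≤ (n + 1) * hellinger p (decoupleLast p)
  | 0, p, hp, _ => by
    have hr : initMarginal p = piPow (firstMarginal p) 0 := by
      ext g
      have hinit (f : Fin 1 → A) : Fin.init f = g := Subsingleton.elim _ _
      simp [initMarginal, pushforward, hinit, piPow, hp.2]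
    rw [piPow_succ, ← hr, Nat.cast_zero, zero_add (1 : ℝ), one_mul]
    rfl
  | n + 1, p, hp, hexch => by
    have hr := hp.initMarginal
    have ih := hellinger_piPow_le_mul_hellinger_decoupleLast n hr hexch.pushforward_init
    rw [firstMarginal_initMarginal] at ih
    set q := firstMarginal p with hq
    calc hellinger p (piPow q (n + 2))
        ≤ hellinger p (decoupleLast p) + hellinger (decoupleLast p) (piPow q (n + 2)) :=
          hellinger_triangle hp hp.decoupleLast (hp.firstMarginal.piPow _)
      _ = hellinger p (decoupleLast p) + hellinger (initMarginal p) (piPow q (n + 1)) := by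
          rw [piPow_succ, decoupleLast, ← hq,
            hellinger_snocProd_right hr.1 (hp.firstMarginal.piPow _).1 hp.firstMarginal]
      _ ≤ hellinger p (decoupleLast p) + (n + 1) * hellinger p (decoupleLast p) := by
          gcongr
          exact ih.trans (by gcongr; exact hellinger_decoupleLast_initMarginal_le hp hexch)
      _ = (↑(n + 1) + 1) * hellinger p (decoupleLast p) := by push_cast; ring

lemma le_initMarginal {p : (Fin (n + 1) → A) → ℝ} (hp : ∀ f, 0 ≤ p f) (f : Fin (n + 1) → A) :
    p f ≤ initMarginal p (Fin.init f) :=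
  le_pushforward_apply hp Fin.init f

lemma le_firstMarginal {p : (Fin (n + 1) → A) → ℝ} (hp : ∀ f, 0 ≤ p f)
    (hexch : IsExchangeable p) (f : Fin (n + 1) → A) (i : Fin (n + 1)) :
    p f ≤ firstMarginal p (f i) := by
  rw [firstMarginal, ← hexch.pushforward_eval i]
  exact le_pushforward_apply hp (fun f => f i) f

lemma sum_mul_log_decoupleLast {p : (Fin (n + 1) → A) → ℝ} (hp : ∀ f, 0 ≤ p f)
    (hexch : IsExchangeable p) :
    ∑ f, p f * log (decoupleLast p f) =
      ∑ g, initMarginal p g * log (initMarginal p g) +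
        ∑ a, firstMarginal p a * log (firstMarginal p a) := by
  have hsplit (f : Fin (n + 1) → A) : p f * log (decoupleLast p f) =
      p f * log (initMarginal p (Fin.init f)) + p f * log (firstMarginal p (f (Fin.last n))) := by
    rcases (hp f).eq_or_lt with hpf | hpf
    · simp [← hpf]
    have hr := hpf.trans_le (le_initMarginal hp f)
    have hq := hpf.trans_le (le_firstMarginal hp hexch f (Fin.last n))
    rw [decoupleLast, snocProd, log_mul hr.ne' hq.ne', mul_add]
  simp_rw [hsplit, sum_add_distrib]
  congr 1
  · exact sum_mul_comp_eq_sum_pushforward Fin.init p fun g => log (initMarginal p g)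
  · rw [sum_mul_comp_eq_sum_pushforward (fun f => f (Fin.last n)) p
      fun a => log (firstMarginal p a), hexch.pushforward_eval _ 0]
    rfl

end Decoupling

theorem making_progress_general
    (T : ℕ) (A : Type) [Fintype A] [DecidableEq A]
    (p : (Fin (T + 1) → A) → ℝ) (hp : ∀ f, 0 ≤ p f) (hp1 : ∑ f, p f = 1)
    (hexch : ∀ (σ : Equiv.Perm (Fin (T + 1))) (f : Fin (T + 1) → A), p (f ∘ σ) = p f)
    (q : A → ℝ) (hq : ∀ a, q a = ∑ f : Fin (T + 1) → A, if f 0 = a then p f else 0)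
    (r : (Fin T → A) → ℝ) (hr : ∀ g, r g = ∑ a, p (Fin.snoc g a))
    (ε : ℝ) (hε : 0 < ε)
    (hhell : ε ≤ Real.sqrt (1 - ∑ f : Fin (T + 1) → A, Real.sqrt (p f * ∏ i, q (f i)))) :
    (-∑ f, p f * Real.log (p f)) - (-∑ g, r g * Real.log (r g))
      ≤ (-∑ a, q a * Real.log (q a)) - 2 * ε ^ 2 / ((T : ℝ) + 1) ^ 2 := by
  have hprob : IsProbVec p := ⟨hp, hp1⟩
  obtain rfl : q = firstMarginal p := funext hq
  obtain rfl : r = initMarginal p := funext fun g => (hr g).trans (pushforward_init_apply p g).symm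
  have hcompare := hellinger_piPow_le_mul_hellinger_decoupleLast T hprob hexch
  have hsq : ε ^ 2 ≤ (T + 1) ^ 2 * (1 - bhattacharyya p (decoupleLast p)) := by
    rw [← hellinger_sq hprob hprob.decoupleLast, ← mul_pow]
    exact pow_le_pow_left₀ hε.le (hhell.trans hcompare) 2
  have hpos (f) (hf : p f ≠ 0) : 0 < decoupleLast p f :=
    have hpf := (hp f).lt_of_ne' hf
    mul_pos (hpf.trans_le (le_initMarginal hp f)) (hpf.trans_le (le_firstMarginal hp hexch f _))
  have hkl := two_mul_one_sub_bhattacharyya_le hprob hpos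
  rw [sum_mul_log_decoupleLast hp hexch] at hkl
  have hdiv : ε ^ 2 / ((T : ℝ) + 1) ^ 2 ≤ 1 - bhattacharyya p (decoupleLast p) := by
    rw [div_le_iff₀ (by positivity)]
    linarith
  rw [mul_div_assoc]
  linarith

/-- **Making progress** (Lemma 3.3).
Let `A₁,…,A_t` (with `t = T+1 ≥ 1`) be exchangeable random variables on a finite
set `A`, with joint pmf `p`, common marginal `q`, and first-`(t−1)`-coordinates
marginal `r`.  If the Hellinger distance between the joint distribution and the
`t`-fold product of the marginal is at least `ε`, then
`H(A_t | A₁ ⋯ A_{t−1}) = H(p) − H(r) ≤ H(q) − 2ε²/t²`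
(entropies with the natural logarithm). -/
theorem making_progress
    (T : ℕ) (A : Type) [Fintype A] [DecidableEq A] [Nonempty A]
    (p : (Fin (T + 1) → A) → ℝ) (hp : ∀ f, 0 ≤ p f) (hp1 : ∑ f, p f = 1)
    (hexch : ∀ (σ : Equiv.Perm (Fin (T + 1))) (f : Fin (T + 1) → A), p (f ∘ σ) = p f)
    (q : A → ℝ) (hq : ∀ a, q a = ∑ f : Fin (T + 1) → A, if f 0 = a then p f else 0)
    (r : (Fin T → A) → ℝ) (hr : ∀ g, r g = ∑ a, p (Fin.snoc g a))
    (ε : ℝ) (hε : 0 < ε)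
    (hhell : ε ≤ Real.sqrt (1 - ∑ f : Fin (T + 1) → A, Real.sqrt (p f * ∏ i, q (f i)))) :
    (-∑ f, p f * Real.log (p f)) - (-∑ g, r g * Real.log (r g))
      ≤ (-∑ a, q a * Real.log (q a)) - 2 * ε ^ 2 / ((T : ℝ) + 1) ^ 2 :=
  making_progress_general T A p hp hp1 hexch q hq r hr ε hε hhell
end

section
/- Let H be a finite-dimensional real inner product space, and let x and y be independent, finitely supported random vectors in H. Let x' be an independent copy of x and y' an independent copy of y. Then E[⟨x,y⟩⁴] ≤ (E[⟨x,x'⟩⁴])^{1/2} · (E[⟨y,y'⟩⁴])^{1/2}. -/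
/-!
`⟨x, y⟩⁴ = ⟨x⊗x⊗x⊗x, y⊗y⊗y⊗y⟩`, so `E⟨x, y⟩⁴` is the inner product of the fourth moment tensors
`E x^⊗4` and `E y^⊗4`, and `E⟨x, x'⟩⁴` is the squared norm of `E x^⊗4`. The inequality is
Cauchy–Schwarz for these two tensors.
-/

open scoped TensorProduct RealInnerProductSpace

section WeightedSum

variable {E : Type*} [NormedAddCommGroup E] [InnerProductSpace ℝ E]
  {α β : Type*} [Fintype α] [Fintype β]

theorem inner_sum_smul_sum_smul (w : α → ℝ) (v : β → ℝ) (u : α → E) (u' : β → E) :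
    ⟪∑ a, w a • u a, ∑ b, v b • u' b⟫ = ∑ a, ∑ b, w a * v b * ⟪u a, u' b⟫ := by
  rw [sum_inner]
  simp only [inner_sum, real_inner_smul_left, real_inner_smul_right, mul_assoc,
    mul_left_comm (v _)]

theorem sum_sum_mul_inner_le_sqrt_mul_sqrt (w : α → ℝ) (v : β → ℝ) (u : α → E) (u' : β → E) :
    ∑ a, ∑ b, w a * v b * ⟪u a, u' b⟫
      ≤ √(∑ a, ∑ a', w a * w a' * ⟪u a, u a'⟫) * √(∑ b, ∑ b', v b * v b' * ⟪u' b, u' b'⟫) := by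
  simp only [← inner_sum_smul_sum_smul, ← norm_eq_sqrt_real_inner]
  exact real_inner_le_norm _ _

end WeightedSum

section FourthTensorPower

variable {𝕜 E : Type*} [RCLike 𝕜] [NormedAddCommGroup E] [InnerProductSpace 𝕜 E]

variable (𝕜) in
noncomputable def fourthTensorPower (x : E) : (E ⊗[𝕜] E) ⊗[𝕜] (E ⊗[𝕜] E) :=
  (x ⊗ₜ x) ⊗ₜ (x ⊗ₜ x)

theorem inner_fourthTensorPower (x y : E) :
    inner 𝕜 (fourthTensorPower 𝕜 x) (fourthTensorPower 𝕜 y) = inner 𝕜 x y ^ 4 := by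
  simp only [fourthTensorPower, TensorProduct.inner_tmul]
  ring

end FourthTensorPower

theorem fourth_moment_cauchy_schwarz_general
    (H : Type) [NormedAddCommGroup H] [InnerProductSpace ℝ H]
    (Ω₁ Ω₂ : Type) [Fintype Ω₁] [Fintype Ω₂]
    (w₁ : Ω₁ → ℝ)
    (w₂ : Ω₂ → ℝ)
    (x : Ω₁ → H) (y : Ω₂ → H) :
    ∑ a, ∑ b, w₁ a * w₂ b * (inner ℝ (x a) (y b) : ℝ) ^ 4
      ≤ Real.sqrt (∑ a, ∑ a', w₁ a * w₁ a' * (inner ℝ (x a) (x a') : ℝ) ^ 4) *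
        Real.sqrt (∑ b, ∑ b', w₂ b * w₂ b' * (inner ℝ (y b) (y b') : ℝ) ^ 4) := by
  simpa only [inner_fourthTensorPower] using
    sum_sum_mul_inner_le_sqrt_mul_sqrt w₁ w₂
      (fourthTensorPower ℝ <| x ·) (fourthTensorPower ℝ <| y ·)

/-- For independent, finitely supported random vectors `x, y` in a finite-dimensional
real inner product space `H` (modelled by weights `w₁, w₂` on finite sample spaces),
with `x'` an independent copy of `x` and `y'` an independent copy of `y`:
`E⟨x,y⟩⁴ ≤ (E⟨x,x'⟩⁴)^{1/2} · (E⟨y,y'⟩⁴)^{1/2}`. -/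
theorem fourth_moment_cauchy_schwarz
    (H : Type) [NormedAddCommGroup H] [InnerProductSpace ℝ H] [FiniteDimensional ℝ H]
    (Ω₁ Ω₂ : Type) [Fintype Ω₁] [Fintype Ω₂]
    (w₁ : Ω₁ → ℝ) (hw₁ : ∀ a, 0 ≤ w₁ a) (hw₁1 : ∑ a, w₁ a = 1)
    (w₂ : Ω₂ → ℝ) (hw₂ : ∀ b, 0 ≤ w₂ b) (hw₂1 : ∑ b, w₂ b = 1)
    (x : Ω₁ → H) (y : Ω₂ → H) :
    ∑ a, ∑ b, w₁ a * w₂ b * (inner ℝ (x a) (y b) : ℝ) ^ 4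
      ≤ Real.sqrt (∑ a, ∑ a', w₁ a * w₁ a' * (inner ℝ (x a) (x a') : ℝ) ^ 4) *
        Real.sqrt (∑ b, ∑ b', w₂ b * w₂ b' * (inner ℝ (y b) (y b') : ℝ) ^ 4) :=
  fourth_moment_cauchy_schwarz_general H Ω₁ Ω₂ w₁ w₂ x y
end

section
/- Let U be a finite nonempty set with |U| = n, let Π be an orthogonal projection on ℝ^U with respect to the expectation inner product, and let 𝒟 be a finitely supported probability distribution over ℝ^U. Then E_{f∼𝒟}[‖Πf‖₄⁴] ≤ (E_{f,f'∼𝒟 independent}[⟨f, Πf'⟩⁴])^{1/2} · ((1/n)·Σ_{u∈U} ‖Πδ_u‖₄⁴)^{1/2}. -/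
/-!
Since `Π` is a self-adjoint idempotent, `(Πf)(u) = ⟨Πf, Πδ_u⟩` and `⟨f, Πf'⟩ = ⟨Πf, Πf'⟩`. Moreover
`⟨x, y⟩⁴ = ⟨x^⊗4, y^⊗4⟩` for the tensor power `x^⊗4 : U⁴ → ℝ`, so both sides are values of the
positive semidefinite form `(μ, ν) ↦ ⟨E_μ (Πf)^⊗4, E_ν (Πf)^⊗4⟩` on signed measures: the left
side pairs `𝒟` with the uniform measure on the `δ_u`, and the two square roots are the diagonal
values at `𝒟` and at that uniform measure. The inequality is Cauchy–Schwarz for this form.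
-/

/-- The expectation inner product on `ℝ^U`: `⟨f,g⟩ = (1/|U|)·Σ_u f(u)·g(u)`. -/
noncomputable def eip {U : Type} [Fintype U] (f g : U → ℝ) : ℝ :=
  (Fintype.card U : ℝ)⁻¹ * ∑ u, f u * g u

open Finset RealInnerProductSpace

section GramForm

variable {E Ω Ξ : Type*} [SeminormedAddCommGroup E] [InnerProductSpace ℝ E] [Fintype Ω]
  [Fintype Ξ] (p : Ω → ℝ) (x : Ω → E) (r : Ξ → ℝ) (y : Ξ → E)

theorem inner_sum_smul_sum_smul_s11 :
    ⟪∑ ω, p ω • x ω, ∑ ξ, r ξ • y ξ⟫ = ∑ ω, ∑ ξ, p ω * r ξ * ⟪x ω, y ξ⟫ := by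
  rw [sum_inner]
  simp_rw [inner_sum, real_inner_smul_left, real_inner_smul_right]
  exact sum_congr rfl fun _ _ => sum_congr rfl fun _ _ => by ring

theorem sum_sum_mul_inner_le_sqrt_mul_sqrt_s11 :
    ∑ ω, ∑ ξ, p ω * r ξ * ⟪x ω, y ξ⟫
      ≤ √(∑ ω, ∑ ω', p ω * p ω' * ⟪x ω, x ω'⟫) * √(∑ ξ, ∑ ξ', r ξ * r ξ' * ⟪y ξ, y ξ'⟫) := by
  simp only [← inner_sum_smul_sum_smul_s11, real_inner_self_eq_norm_sq, Real.sqrt_sq (norm_nonneg _)]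
  exact real_inner_le_norm _ _

end GramForm

/-- The factor `√(1/|U|) ^ k` turns `eip` into the Euclidean inner product of tensor powers. -/
noncomputable def tensorPower {U : Type} [Fintype U] (k : ℕ) (x : U → ℝ) :
    EuclideanSpace ℝ (Fin k → U) :=
  WithLp.toLp 2 fun q => √(Fintype.card U : ℝ)⁻¹ ^ k * ∏ i, x (q i)

theorem inner_tensorPower {U : Type} [Fintype U] (k : ℕ) (x y : U → ℝ) :
    ⟪tensorPower k x, tensorPower k y⟫ = eip x y ^ k := by
  classical
  have hc : √(Fintype.card U : ℝ)⁻¹ ^ 2 = (Fintype.card U : ℝ)⁻¹ := Real.sq_sqrt (by positivity)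
  rw [eip, mul_pow, ← hc, ← pow_mul, mul_comm 2, pow_mul, Fintype.sum_pow, mul_sum,
    PiLp.inner_apply]
  refine sum_congr rfl fun q _ => ?_
  simp only [tensorPower, RCLike.inner_apply, conj_trivial, prod_mul_distrib]
  ring

section OrthogonalProjection

variable {U : Type} [Fintype U]

def delta [DecidableEq U] (u : U) : U → ℝ := fun v => if v = u then (Fintype.card U : ℝ) else 0

theorem eip_delta [DecidableEq U] (g : U → ℝ) (u : U) : eip g (delta u) = g u := by
  have : Nonempty U := ⟨u⟩
  have hn : (Fintype.card U : ℝ) ≠ 0 := Nat.cast_ne_zero.2 Fintype.card_ne_zero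
  simp only [eip, delta, mul_ite, mul_zero, sum_ite_eq', mem_univ, if_true]
  field_simp

variable (Pi : (U → ℝ) →ₗ[ℝ] (U → ℝ))

theorem eip_proj_right (hidem : ∀ f, Pi (Pi f) = Pi f)
    (hselfadj : ∀ f g, eip (Pi f) g = eip f (Pi g)) (f g : U → ℝ) :
    eip f (Pi g) = eip (Pi f) (Pi g) := by
  rw [hselfadj, hidem]

theorem proj_apply_eq_eip [DecidableEq U] (hidem : ∀ f, Pi (Pi f) = Pi f)
    (hselfadj : ∀ f g, eip (Pi f) g = eip f (Pi g)) (f : U → ℝ) (u : U) :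
    Pi f u = eip (Pi f) (Pi (delta u)) := by
  rw [← hselfadj, hidem, eip_delta]

end OrthogonalProjection

theorem coordinate_projection_rounding_general
    (U : Type) [Fintype U] [DecidableEq U]
    (Pi : (U → ℝ) →ₗ[ℝ] (U → ℝ))
    (hidem : ∀ f, Pi (Pi f) = Pi f)
    (hselfadj : ∀ f g, eip (Pi f) g = eip f (Pi g))
    (Ω : Type) [Fintype Ω]
    (w : Ω → ℝ)
    (F : Ω → U → ℝ) :
    ∑ ω, w ω * ((Fintype.card U : ℝ)⁻¹ * ∑ u, (Pi (F ω) u) ^ 4)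
      ≤ Real.sqrt (∑ ω, ∑ ω', w ω * w ω' * (eip (F ω) (Pi (F ω'))) ^ 4) *
        Real.sqrt ((Fintype.card U : ℝ)⁻¹ * ∑ u,
          ((Fintype.card U : ℝ)⁻¹ * ∑ v,
            (Pi (fun v' => if v' = u then (Fintype.card U : ℝ) else 0) v) ^ 4)) := by
  set c : ℝ := (Fintype.card U : ℝ)⁻¹
  let T := fun f => tensorPower 4 (Pi f)
  have hT (f g : U → ℝ) : ⟪T f, T g⟫ = eip (Pi f) (Pi g) ^ 4 := inner_tensorPower 4 _ _
  calc ∑ ω, w ω * (c * ∑ u, (Pi (F ω) u) ^ 4)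
      = ∑ ω, ∑ u, w ω * c * ⟪T (F ω), T (delta u)⟫ := by
        simp_rw [hT, ← proj_apply_eq_eip Pi hidem hselfadj, mul_sum, mul_assoc]
    _ ≤ √(∑ ω, ∑ ω', w ω * w ω' * ⟪T (F ω), T (F ω')⟫)
          * √(∑ u, ∑ v, c * c * ⟪T (delta u), T (delta v)⟫) :=
        sum_sum_mul_inner_le_sqrt_mul_sqrt_s11 w _ (fun _ => c) _
    _ = _ := by
        simp_rw [hT, ← proj_apply_eq_eip Pi hidem hselfadj, ← eip_proj_right Pi hidem hselfadj,
          mul_sum, mul_assoc]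
        rfl

/-- **Coordinate projection rounding** (Lemma 4.5).
For an orthogonal projection `Π` on `ℝ^U` (for the expectation inner product) and a
finitely supported distribution `𝒟` (weights `w` on a finite sample space `Ω`,
functions `F ω : U → ℝ`):
`E_{f∼𝒟} ‖Πf‖₄⁴ ≤ (E_{f,f'∼𝒟} ⟨f, Πf'⟩⁴)^{1/2} · (E_u ‖Πδ_u‖₄⁴)^{1/2}`,
where `δ_u(u') = |U|·[u' = u]`. -/
theorem coordinate_projection_rounding
    (U : Type) [Fintype U] [DecidableEq U] [Nonempty U]
    (Pi : (U → ℝ) →ₗ[ℝ] (U → ℝ))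
    (hidem : ∀ f, Pi (Pi f) = Pi f)
    (hselfadj : ∀ f g, eip (Pi f) g = eip f (Pi g))
    (Ω : Type) [Fintype Ω]
    (w : Ω → ℝ) (hw : ∀ ω, 0 ≤ w ω) (hw1 : ∑ ω, w ω = 1)
    (F : Ω → U → ℝ) :
    ∑ ω, w ω * ((Fintype.card U : ℝ)⁻¹ * ∑ u, (Pi (F ω) u) ^ 4)
      ≤ Real.sqrt (∑ ω, ∑ ω', w ω * w ω' * (eip (F ω) (Pi (F ω'))) ^ 4) *
        Real.sqrt ((Fintype.card U : ℝ)⁻¹ * ∑ u,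
          ((Fintype.card U : ℝ)⁻¹ * ∑ v,
            (Pi (fun v' => if v' = u then (Fintype.card U : ℝ) else 0) v) ^ 4)) :=
  coordinate_projection_rounding_general U Pi hidem hselfadj Ω w F
end

section
/- Let U be a finite nonempty set, let r be an even positive integer, and let 𝒟 be a finitely supported probability distribution over ℝ^U such that E_{f,g∼𝒟 independent}[⟨f², g²⟩^r] > 0, where f² denotes the pointwise square of f and ⟨·,·⟩ is the expectation inner product. Then there exist points u₁,…,u_r ∈ U with E_{f∼𝒟}[f(u₁)²⋯f(u_r)²] > 0 such that the reweighted distribution 𝒟' defined by Pr_{𝒟'}[f] = Pr_{𝒟}[f]·f(u₁)²⋯f(u_r)² / E_{h∼𝒟}[h(u₁)²⋯h(u_r)²] satisfies E_{f,g∼𝒟' independent}[⟨f², g²⟩] ≥ (E_{f,g∼𝒟 independent}[⟨f², g²⟩^r])^{1/r}. -/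
open Finset

namespace Conditioning

lemma sum_mul_pow_mul_rpow_inv_le {ι : Type*} (s : Finset ι) {a x : ι → ℝ}
    (ha : ∀ i ∈ s, 0 ≤ a i) (ha1 : ∑ i ∈ s, a i = 1) (hx : ∀ i ∈ s, 0 ≤ x i)
    {r : ℕ} (hr : 0 < r) :
    (∑ i ∈ s, a i * x i ^ r) * (∑ i ∈ s, a i * x i ^ r) ^ (r : ℝ)⁻¹ ≤
      ∑ i ∈ s, a i * x i ^ (r + 1) := by
  have hr' : (r : ℝ) ≠ 0 := by positivity
  have hm : 0 ≤ ∑ i ∈ s, a i * x i ^ r :=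
    sum_nonneg fun i hi => mul_nonneg (ha i hi) (pow_nonneg (hx i hi) r)
  calc _ = (∑ i ∈ s, a i * x i ^ r) ^ (1 + (r : ℝ)⁻¹) := by
        rw [Real.rpow_add' hm (by positivity), Real.rpow_one]
    _ ≤ ∑ i ∈ s, a i * (x i ^ r) ^ (1 + (r : ℝ)⁻¹) :=
        Real.rpow_arith_mean_le_arith_mean_rpow s a _ ha ha1
          (fun i hi => pow_nonneg (hx i hi) r) (by simp)
    _ = _ := sum_congr rfl fun i hi => by
        rw [← Real.rpow_natCast, ← Real.rpow_mul (hx i hi), mul_add, mul_one,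
          mul_inv_cancel₀ hr', ← Nat.cast_succ, Real.rpow_natCast]

lemma exists_and_le_of_sum_le {ι : Type*} [Fintype ι] {f g : ι → ℝ} (P : ι → Prop)
    (hf : ∀ i, ¬ P i → f i = 0) (hg : ∀ i, ¬ P i → g i = 0) (hP : ∃ i, P i)
    (h : ∑ i, f i ≤ ∑ i, g i) : ∃ i, P i ∧ f i ≤ g i := by
  classical
  have hrestrict : ∀ φ : ι → ℝ, (∀ i, ¬ P i → φ i = 0) → ∑ i with P i, φ i = ∑ i, φ i :=
    fun φ hφ => sum_filter_of_ne fun i _ => not_imp_comm.1 (hφ i)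
  obtain ⟨i, hi, hle⟩ := exists_le_of_sum_le (f := f) (g := g) (s := univ.filter P)
    (by simpa [Finset.Nonempty] using hP) (by rwa [hrestrict f hf, hrestrict g hg])
  exact ⟨i, (mem_filter.1 hi).2, hle⟩

lemma sum_sum_div_mul_div_mul {Ω : Type*} [Fintype Ω] (x : Ω → ℝ) (m : ℝ) (G : Ω → Ω → ℝ) :
    ∑ ω, ∑ ω', x ω / m * (x ω' / m) * G ω ω' = (∑ ω, ∑ ω', x ω * x ω' * G ω ω') / m ^ 2 := by
  rw [sum_div]
  refine sum_congr rfl fun ω _ => ?_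
  rw [sum_div]
  exact sum_congr rfl fun ω' _ => by ring

variable {U : Type} [Fintype U]

lemma eip_nonneg {f g : U → ℝ} (hf : ∀ u, 0 ≤ f u) (hg : ∀ u, 0 ≤ g u) : 0 ≤ eip f g :=
  mul_nonneg (by positivity) (sum_nonneg fun u _ => mul_nonneg (hf u) (hg u))

lemma eip_pow (f g : U → ℝ) (k : ℕ) :
    eip f g ^ k = (Fintype.card U : ℝ)⁻¹ ^ k * ∑ p : Fin k → U, ∏ j, f (p j) * g (p j) := by
  rw [eip, mul_pow, sum_pow', Fintype.piFinset_univ]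

variable {Ω : Type} [Fintype Ω]

noncomputable def pairMoment (w : Ω → ℝ) (a : Ω → U → ℝ) (k : ℕ) : ℝ :=
  ∑ ω, ∑ ω', w ω * w ω' * eip (a ω) (a ω') ^ k

noncomputable def tiltedWeight (w : Ω → ℝ) (a : Ω → U → ℝ) {r : ℕ} (p : Fin r → U) (ω : Ω) :
    ℝ :=
  w ω * ∏ j, a ω (p j)

section Expansion

variable (w : Ω → ℝ) (a : Ω → U → ℝ)

lemma sum_sum_mul_eip_pow_mul (k : ℕ) (G : Ω → Ω → ℝ) :
    ∑ ω, ∑ ω', w ω * w ω' * eip (a ω) (a ω') ^ k * G ω ω' =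
      (Fintype.card U : ℝ)⁻¹ ^ k * ∑ p : Fin k → U, ∑ ω, ∑ ω',
        tiltedWeight w a p ω * tiltedWeight w a p ω' * G ω ω' := by
  have hpair : ∀ ω ω', w ω * w ω' * eip (a ω) (a ω') ^ k * G ω ω' =
      ∑ p : Fin k → U, (Fintype.card U : ℝ)⁻¹ ^ k *
        (tiltedWeight w a p ω * tiltedWeight w a p ω' * G ω ω') := by
    intro ω ω'
    simp only [eip_pow, mul_sum, sum_mul]
    exact sum_congr rfl fun p _ => by simp only [tiltedWeight, prod_mul_distrib]; ring
  simp_rw [hpair, mul_sum]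
  exact (sum_congr rfl fun ω _ => sum_comm).trans sum_comm

lemma pairMoment_eq (k : ℕ) :
    pairMoment w a k =
      (Fintype.card U : ℝ)⁻¹ ^ k * ∑ p : Fin k → U, (∑ ω, tiltedWeight w a p ω) ^ 2 := by
  have h := sum_sum_mul_eip_pow_mul w a k fun _ _ => 1
  simp only [mul_one] at h
  simp_rw [pairMoment, h, sq, sum_mul_sum]

lemma pairMoment_succ_eq (k : ℕ) :
    pairMoment w a (k + 1) =
      (Fintype.card U : ℝ)⁻¹ ^ k * ∑ p : Fin k → U, ∑ ω, ∑ ω',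
        tiltedWeight w a p ω * tiltedWeight w a p ω' * eip (a ω) (a ω') := by
  rw [pairMoment, ← sum_sum_mul_eip_pow_mul]
  simp only [pow_succ, mul_assoc]

end Expansion

variable {w : Ω → ℝ} {a : Ω → U → ℝ}

lemma pairMoment_mul_rpow_inv_le (hw : ∀ ω, 0 ≤ w ω) (hw1 : ∑ ω, w ω = 1)
    (ha : ∀ ω u, 0 ≤ a ω u) {r : ℕ} (hr : 0 < r) :
    pairMoment w a r * pairMoment w a r ^ (r : ℝ)⁻¹ ≤ pairMoment w a (r + 1) := by
  have h := sum_mul_pow_mul_rpow_inv_le (univ : Finset (Ω × Ω))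
    (a := fun z => w z.1 * w z.2) (x := fun z => eip (a z.1) (a z.2))
    (fun z _ => mul_nonneg (hw _) (hw _))
    (by rw [Fintype.sum_prod_type, ← sum_mul_sum, hw1, one_mul])
    (fun z _ => eip_nonneg (ha _) (ha _)) hr
  simpa only [pairMoment, Fintype.sum_prod_type] using h

theorem exists_rpow_inv_pairMoment_le_tilted (hw : ∀ ω, 0 ≤ w ω) (hw1 : ∑ ω, w ω = 1)
    (ha : ∀ ω u, 0 ≤ a ω u) {r : ℕ} (hr : 0 < r) (hpos : 0 < pairMoment w a r) :
    ∃ p : Fin r → U, 0 < ∑ ω, tiltedWeight w a p ω ∧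
      pairMoment w a r ^ (r : ℝ)⁻¹ ≤
        ∑ ω, ∑ ω', tiltedWeight w a p ω / (∑ ω'', tiltedWeight w a p ω'') *
          (tiltedWeight w a p ω' / ∑ ω'', tiltedWeight w a p ω'') * eip (a ω) (a ω') := by
  have htilt : ∀ (p : Fin r → U) ω, 0 ≤ tiltedWeight w a p ω :=
    fun p ω => mul_nonneg (hw ω) (prod_nonneg fun j _ => ha ω (p j))
  have hkey := pairMoment_mul_rpow_inv_le hw hw1 ha hr
  set c := pairMoment w a r ^ (r : ℝ)⁻¹
  rw [pairMoment_succ_eq, pairMoment_eq] at hkey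
  rw [pairMoment_eq] at hpos
  have hN : 0 < (Fintype.card U : ℝ)⁻¹ ^ r :=
    pos_of_mul_pos_left hpos (sum_nonneg fun _ _ => sq_nonneg _)
  have hsum : ∑ p : Fin r → U, c * (∑ ω, tiltedWeight w a p ω) ^ 2 ≤
      ∑ p : Fin r → U, ∑ ω, ∑ ω',
        tiltedWeight w a p ω * tiltedWeight w a p ω' * eip (a ω) (a ω') := by
    rw [← mul_sum]
    exact le_of_mul_le_mul_left (by linarith) hN
  have hvanish : ∀ p : Fin r → U, ∑ ω, tiltedWeight w a p ω = 0 → ∀ ω, tiltedWeight w a p ω = 0 :=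
    fun p h ω => (sum_eq_zero_iff_of_nonneg fun ω _ => htilt p ω).1 h ω (mem_univ ω)
  obtain ⟨p, hp0, hp⟩ := exists_and_le_of_sum_le (fun p => ∑ ω, tiltedWeight w a p ω ≠ 0)
    (fun p h => by rw [not_not.1 h]; ring)
    (fun p h => by simp [hvanish p (not_not.1 h)])
    (by by_contra! h; simp [h] at hpos)
    hsum
  refine ⟨p, (sum_nonneg fun ω _ => htilt p ω).lt_of_ne' hp0, ?_⟩
  rw [sum_sum_div_mul_div_mul, le_div_iff₀ (by positivity)]
  exact hp

end Conditioning

theorem conditioning_general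
    (U : Type) [Fintype U]
    (r : ℕ) (hr : 0 < r)
    (Ω : Type) [Fintype Ω]
    (w : Ω → ℝ) (hw : ∀ ω, 0 ≤ w ω) (hw1 : ∑ ω, w ω = 1)
    (F : Ω → U → ℝ)
    (hpos : 0 < ∑ ω, ∑ ω', w ω * w ω' *
        (eip (fun u => F ω u ^ 2) (fun u => F ω' u ^ 2)) ^ r) :
    ∃ pts : Fin r → U,
      (0 < ∑ ω, w ω * ∏ j, F ω (pts j) ^ 2) ∧
      ∑ ω, ∑ ω',
          ((w ω * ∏ j, F ω (pts j) ^ 2) / (∑ ω'', w ω'' * ∏ j, F ω'' (pts j) ^ 2)) *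
          ((w ω' * ∏ j, F ω' (pts j) ^ 2) / (∑ ω'', w ω'' * ∏ j, F ω'' (pts j) ^ 2)) *
          eip (fun u => F ω u ^ 2) (fun u => F ω' u ^ 2)
        ≥ (∑ ω, ∑ ω', w ω * w ω' *
            (eip (fun u => F ω u ^ 2) (fun u => F ω' u ^ 2)) ^ r) ^ ((r : ℝ)⁻¹) :=
  Conditioning.exists_rpow_inv_pairMoment_le_tilted (a := fun ω u => F ω u ^ 2) hw hw1
    (fun ω u => sq_nonneg (F ω u)) hr hpos

/-- **Conditioning** (Lemma 4.7).
Let `r` be an even positive integer and `𝒟` a finitely supported distribution over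
`ℝ^U` (weights `w` on a finite `Ω`, functions `F ω`) with
`E_{f,g∼𝒟} ⟨f²,g²⟩^r > 0`.  Then there are points `u₁,…,u_r ∈ U` with
`E_{f∼𝒟}[f(u₁)²⋯f(u_r)²] > 0` such that the distribution `𝒟'` obtained by
reweighing `𝒟` proportionally to `f(u₁)²⋯f(u_r)²` satisfies
`E_{f,g∼𝒟'} ⟨f²,g²⟩ ≥ (E_{f,g∼𝒟} ⟨f²,g²⟩^r)^{1/r}`. -/
theorem conditioning
    (U : Type) [Fintype U] [Nonempty U]
    (r : ℕ) (hr : 0 < r) (hreven : Even r)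
    (Ω : Type) [Fintype Ω]
    (w : Ω → ℝ) (hw : ∀ ω, 0 ≤ w ω) (hw1 : ∑ ω, w ω = 1)
    (F : Ω → U → ℝ)
    (hpos : 0 < ∑ ω, ∑ ω', w ω * w ω' *
        (eip (fun u => F ω u ^ 2) (fun u => F ω' u ^ 2)) ^ r) :
    ∃ pts : Fin r → U,
      (0 < ∑ ω, w ω * ∏ j, F ω (pts j) ^ 2) ∧
      ∑ ω, ∑ ω',
          ((w ω * ∏ j, F ω (pts j) ^ 2) / (∑ ω'', w ω'' * ∏ j, F ω'' (pts j) ^ 2)) *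
          ((w ω' * ∏ j, F ω' (pts j) ^ 2) / (∑ ω'', w ω'' * ∏ j, F ω'' (pts j) ^ 2)) *
          eip (fun u => F ω u ^ 2) (fun u => F ω' u ^ 2)
        ≥ (∑ ω, ∑ ω', w ω * w ω' *
            (eip (fun u => F ω u ^ 2) (fun u => F ω' u ^ 2)) ^ r) ^ ((r : ℝ)⁻¹) :=
  conditioning_general U r hr Ω w hw hw1 F hpos
end

section
/- Let U be a finite nonempty set, let 0 < ε ≤ 1/400, let Π be an orthogonal projection on ℝ^U with respect to the expectation inner product, and let f : U → {0,1} satisfy Pr_{u∈U}[f(u) = 1] = μ and ‖Πf‖₂² ≥ (1−ε)·μ. Then there exists a function g : U → ℝ such that (1) ‖g‖₄⁴ ≥ μ/32, and (2) (Πf)(u)² ≥ |g(u)|/2 for every u ∈ U. -/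
/-!
Write `h = Πf`. Since `Π` is a self-adjoint idempotent, `⟨h,h⟩ = ⟨f,h⟩`, so Pythagoras gives
`‖f - h‖₂² = ‖f‖₂² - ‖h‖₂² ≤ εμ`, using `‖f‖₂² = μ` for Boolean `f`. Take `g = ½·1[h ≥ ½]`,
so that `h² ≥ |g|/2` everywhere. A point with `f(u) = 1` but `h(u) < ½` contributes more than
`¼` to `‖f - h‖₂²`, whence `g⁴ ≥ (f - 4(f - h)²)/16` pointwise, and averaging gives
`‖g‖₄⁴ ≥ μ/16 - εμ/4 ≥ μ/32`.
-/

section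
variable {U : Type} [Fintype U]

lemma eip_sub_sub (f h : U → ℝ) :
    eip (f - h) (f - h) = eip f f - 2 * eip f h + eip h h := by
  simp only [eip, Pi.sub_apply]
  have hexpand : ∀ u, (f u - h u) * (f u - h u) = f u * f u - 2 * (f u * h u) + h u * h u :=
    fun u => by ring
  simp only [hexpand, Finset.sum_add_distrib, Finset.sum_sub_distrib, ← Finset.mul_sum]
  ring

lemma eip_sub_map_self {Pi : (U → ℝ) →ₗ[ℝ] (U → ℝ)} (hidem : ∀ f, Pi (Pi f) = Pi f)
    (hselfadj : ∀ f g, eip (Pi f) g = eip f (Pi g)) (f : U → ℝ) :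
    eip (f - Pi f) (f - Pi f) = eip f f - eip (Pi f) (Pi f) := by
  have hmap : eip (Pi f) (Pi f) = eip f (Pi f) := by rw [hselfadj, hidem]
  rw [eip_sub_sub, hmap]
  ring

lemma eip_self_of_boolean {f : U → ℝ} (hf01 : ∀ u, f u = 0 ∨ f u = 1) :
    eip f f = (Fintype.card U : ℝ)⁻¹ * ∑ u, f u := by
  unfold eip
  congr 1
  refine Finset.sum_congr rfl fun u _ => ?_
  rcases hf01 u with hu | hu <;> simp [hu]

lemma mean_nonneg_of_boolean {f : U → ℝ} (hf01 : ∀ u, f u = 0 ∨ f u = 1) :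
    0 ≤ (Fintype.card U : ℝ)⁻¹ * ∑ u, f u := by
  refine mul_nonneg (by positivity) (Finset.sum_nonneg fun u _ => ?_)
  rcases hf01 u with hu | hu <;> simp [hu]

end

lemma boolean_sub_four_mul_sq_le_threshold_pow_four {x y : ℝ} (hx : x = 0 ∨ x = 1) :
    (x - 4 * (x - y) ^ 2) / 16 ≤ (if 1 / 2 ≤ y then 1 / 2 else 0) ^ 4 := by
  split_ifs with hy
  · rcases hx with rfl | rfl <;> nlinarith [sq_nonneg (1 - y)]
  · rcases hx with rfl | rfl <;> nlinarith

theorem truncation_general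
    (U : Type) [Fintype U]
    (ε : ℝ) (hε : ε ≤ 1 / 400)
    (Pi : (U → ℝ) →ₗ[ℝ] (U → ℝ))
    (hidem : ∀ f, Pi (Pi f) = Pi f)
    (hselfadj : ∀ f g, eip (Pi f) g = eip f (Pi g))
    (f : U → ℝ) (hf01 : ∀ u, f u = 0 ∨ f u = 1)
    (μ : ℝ) (hμ : μ = (Fintype.card U : ℝ)⁻¹ * ∑ u, f u)
    (hproj : (Fintype.card U : ℝ)⁻¹ * ∑ u, (Pi f u) ^ 2 ≥ (1 - ε) * μ) :
    ∃ g : U → ℝ,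
      (Fintype.card U : ℝ)⁻¹ * ∑ u, g u ^ 4 ≥ μ / 32 ∧
      ∀ u, (Pi f u) ^ 2 ≥ |g u| / 2 := by
  have hμ0 : 0 ≤ μ := hμ ▸ mean_nonneg_of_boolean hf01
  have hdist : eip (f - Pi f) (f - Pi f) ≤ ε * μ := by
    have hnorm : eip (Pi f) (Pi f) = (Fintype.card U : ℝ)⁻¹ * ∑ u, (Pi f u) ^ 2 := by
      simp only [eip, sq]
    rw [eip_sub_map_self hidem hselfadj, eip_self_of_boolean hf01, ← hμ, hnorm]
    linarith
  refine ⟨fun u => if 1 / 2 ≤ Pi f u then 1 / 2 else 0, ?_, fun u => ?_⟩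
  · calc μ / 32 ≤ μ / 16 - eip (f - Pi f) (f - Pi f) / 4 := by nlinarith
      _ = (Fintype.card U : ℝ)⁻¹ * ∑ u, (f u - 4 * (f u - Pi f u) ^ 2) / 16 := by
        simp only [hμ, eip, _root_.Pi.sub_apply, ← Finset.sum_div, Finset.sum_sub_distrib,
          ← Finset.mul_sum, sq]
        ring
      _ ≤ _ := by
        gcongr with u
        exact boolean_sub_four_mul_sq_le_threshold_pow_four (hf01 u)
  · dsimp only
    split_ifs with hu
    · rw [abs_of_pos (by norm_num)]
      nlinarith
    · simpa using sq_nonneg (Pi f u)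

/-- **Truncation** (Lemma 4.8).
Let `0 < ε ≤ 1/400`, let `Π` be an orthogonal projection on `ℝ^U` (for the
expectation inner product), and let `f : U → {0,1}` with `Pr_u[f(u) = 1] = μ` and
`‖Πf‖₂² ≥ (1−ε)·μ`.  Then there is `g : U → ℝ` with `‖g‖₄⁴ ≥ μ/32` and
`(Πf)(u)² ≥ |g(u)|/2` for all `u`. -/
theorem truncation
    (U : Type) [Fintype U] [Nonempty U]
    (ε : ℝ) (hε0 : 0 < ε) (hε : ε ≤ 1 / 400)
    (Pi : (U → ℝ) →ₗ[ℝ] (U → ℝ))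
    (hidem : ∀ f, Pi (Pi f) = Pi f)
    (hselfadj : ∀ f g, eip (Pi f) g = eip f (Pi g))
    (f : U → ℝ) (hf01 : ∀ u, f u = 0 ∨ f u = 1)
    (μ : ℝ) (hμ : μ = (Fintype.card U : ℝ)⁻¹ * ∑ u, f u)
    (hproj : (Fintype.card U : ℝ)⁻¹ * ∑ u, (Pi f u) ^ 2 ≥ (1 - ε) * μ) :
    ∃ g : U → ℝ,
      (Fintype.card U : ℝ)⁻¹ * ∑ u, g u ^ 4 ≥ μ / 32 ∧
      ∀ u, (Pi f u) ^ 2 ≥ |g u| / 2 :=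
  truncation_general U ε hε Pi hidem hselfadj f hf01 μ hμ hproj
end

section
/- Let U be a finite nonempty set, and equip ℝ^U with the expectation inner product and norms. Let V' ⊆ ℝ^U be a linear subspace such that ‖g‖₄ ≤ c‖g‖₂ for every g ∈ V', and let f₀ ∈ ℝ^U be orthogonal to V' with ‖f₀‖₂ = 1 and ‖f₀‖₄ = C, where 0 ≤ 100c < C. Then every f in the span of V' ∪ {f₀} with ‖f‖₂ = 1 and ‖f‖₄ ≥ C satisfies ⟨f, f₀⟩² ≥ 1 − 2c/C. -/
/-! Write `f = g + α f₀` with `g ∈ V'`. Orthogonality gives `⟨f, f₀⟩ = α` and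
`‖g‖₂² + α² = 1`, so `‖g‖₄ ≤ c‖g‖₂ ≤ c`, and Minkowski's inequality gives
`C ≤ ‖f‖₄ ≤ c + |α| C`. Hence `|α| ≥ 1 - c/C`, and `(1 - c/C)² ≥ 1 - 2c/C`. -/

/-- The expectation `L²` norm on `ℝ^U`. -/
noncomputable def enorm2 {U : Type} [Fintype U] (f : U → ℝ) : ℝ :=
  Real.sqrt ((Fintype.card U : ℝ)⁻¹ * ∑ u, f u ^ 2)

/-- The expectation `L⁴` norm on `ℝ^U`. -/
noncomputable def enorm4 {U : Type} [Fintype U] (f : U → ℝ) : ℝ :=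
  ((Fintype.card U : ℝ)⁻¹ * ∑ u, f u ^ 4) ^ ((1 : ℝ) / 4)

section ExpectationNorms

variable {U : Type} [Fintype U]

lemma eip_comm (f g : U → ℝ) : eip f g = eip g f := by
  simp only [eip, mul_comm (f _)]

lemma eip_add_left (f g h : U → ℝ) : eip (f + g) h = eip f h + eip g h := by
  simp only [eip, Pi.add_apply, add_mul, Finset.sum_add_distrib, mul_add]

lemma eip_smul_left (a : ℝ) (f g : U → ℝ) : eip (a • f) g = a * eip f g := by
  simp only [eip, Pi.smul_apply, smul_eq_mul, mul_assoc, ← Finset.mul_sum]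
  ring

lemma eip_add_right (f g h : U → ℝ) : eip f (g + h) = eip f g + eip f h := by
  rw [eip_comm, eip_add_left, eip_comm g, eip_comm h]

lemma eip_smul_right (a : ℝ) (f g : U → ℝ) : eip f (a • g) = a * eip f g := by
  rw [eip_comm, eip_smul_left, eip_comm]

lemma eip_add_smul_of_eip_eq_zero {g h : U → ℝ} (hgh : eip g h = 0) (a : ℝ) :
    eip (g + a • h) h = a * eip h h := by
  rw [eip_add_left, eip_smul_left, hgh, zero_add]

lemma eip_add_smul_self_of_eip_eq_zero {g h : U → ℝ} (hgh : eip g h = 0) (a : ℝ) :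
    eip (g + a • h) (g + a • h) = eip g g + a ^ 2 * eip h h := by
  have hhg : eip h g = 0 := by rw [eip_comm, hgh]
  simp only [eip_add_left, eip_add_right, eip_smul_left, eip_smul_right, hgh, hhg]
  ring

lemma enorm2_eq_sqrt_eip (f : U → ℝ) : enorm2 f = Real.sqrt (eip f f) := by
  simp only [enorm2, eip, sq]

lemma abs_rpow_four (x : ℝ) : |x| ^ (4 : ℝ) = x ^ 4 := by
  rw [show (4 : ℝ) = (4 : ℕ) by norm_num, Real.rpow_natCast, pow_abs, abs_of_nonneg (by positivity)]

lemma enorm4_add_le (f g : U → ℝ) : enorm4 (f + g) ≤ enorm4 f + enorm4 g := by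
  have hn : (0 : ℝ) ≤ (Fintype.card U : ℝ)⁻¹ := by positivity
  have minkowski := Real.Lp_add_le Finset.univ f g (by norm_num : (1 : ℝ) ≤ 4)
  simp only [abs_rpow_four] at minkowski
  simp only [enorm4, Pi.add_apply]
  rw [Real.mul_rpow hn (by positivity), Real.mul_rpow hn (by positivity),
    Real.mul_rpow hn (by positivity), ← mul_add]
  exact mul_le_mul_of_nonneg_left minkowski (by positivity)

lemma enorm4_smul (a : ℝ) (f : U → ℝ) : enorm4 (a • f) = |a| * enorm4 f := by
  have hsum : ∑ u, (a • f) u ^ 4 = |a| ^ (4 : ℝ) * ∑ u, f u ^ 4 := by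
    simp only [abs_rpow_four, Finset.mul_sum, Pi.smul_apply, smul_eq_mul, mul_pow]
  rw [enorm4, enorm4, hsum, mul_left_comm, Real.mul_rpow (by positivity) (by positivity),
    ← Real.rpow_mul (abs_nonneg a)]
  norm_num

end ExpectationNorms

lemma one_sub_two_mul_div_le_sq {c C α : ℝ} (hC : 0 < C) (h : C ≤ c + |α| * C) :
    1 - 2 * c / C ≤ α ^ 2 := by
  have hα : 1 - c / C ≤ |α| := by
    rw [sub_le_iff_le_add, add_div' _ _ _ hC.ne', le_div_iff₀ hC]
    linarith
  rw [mul_div_assoc, ← sq_abs α]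
  rcases le_or_gt 0 (1 - c / C) with hpos | hneg
  · nlinarith [sq_nonneg (c / C)]
  · nlinarith [sq_nonneg α]

theorem approx_recovery_general
    (U : Type) [Fintype U]
    (V' : Submodule ℝ (U → ℝ)) (c C : ℝ) (hc : 0 ≤ c) (hcC : 100 * c < C)
    (hV' : ∀ g ∈ V', enorm4 g ≤ c * enorm2 g)
    (f₀ : U → ℝ)
    (horth : ∀ g ∈ V', eip f₀ g = 0)
    (hf₀2 : enorm2 f₀ = 1) (hf₀4 : enorm4 f₀ = C)
    (f : U → ℝ) (hfV : f ∈ V' ⊔ Submodule.span ℝ {f₀})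
    (hf2 : enorm2 f = 1) (hf4 : C ≤ enorm4 f) :
    1 - 2 * c / C ≤ (eip f f₀) ^ 2 := by
  obtain ⟨g, hg, _, hspan, rfl⟩ := Submodule.mem_sup.mp hfV
  obtain ⟨α, rfl⟩ := Submodule.mem_span_singleton.mp hspan
  have hgf₀ : eip g f₀ = 0 := by rw [eip_comm, horth g hg]
  have hf₀f₀ : eip f₀ f₀ = 1 := by rwa [enorm2_eq_sqrt_eip, Real.sqrt_eq_one] at hf₀2
  have hpyth : eip g g + α ^ 2 = 1 := by
    rwa [enorm2_eq_sqrt_eip, Real.sqrt_eq_one, eip_add_smul_self_of_eip_eq_zero hgf₀,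
      hf₀f₀, mul_one] at hf2
  have hg2 : enorm2 g ≤ 1 := by
    rw [enorm2_eq_sqrt_eip, Real.sqrt_le_one]
    nlinarith [sq_nonneg α]
  have hg4 : enorm4 g ≤ c := (hV' g hg).trans (mul_le_of_le_one_right hc hg2)
  have htri : C ≤ c + |α| * C := by
    calc C ≤ enorm4 (g + α • f₀) := hf4
      _ ≤ enorm4 g + |α| * C := by rw [← hf₀4, ← enorm4_smul]; exact enorm4_add_le g _
      _ ≤ c + |α| * C := by linarith
  rw [eip_add_smul_of_eip_eq_zero hgf₀, hf₀f₀, mul_one]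
  exact one_sub_two_mul_div_le_sq (by linarith) htri

/-- (Lemma 5.6.)  Let `V'` be a subspace of `ℝ^U` with `‖g‖₄ ≤ c‖g‖₂` for all
`g ∈ V'`, and let `f₀ ⊥ V'` with `‖f₀‖₂ = 1`, `‖f₀‖₄ = C` and `0 ≤ 100c < C`.
Then every `f ∈ span(V' ∪ {f₀})` with `‖f‖₂ = 1` and `‖f‖₄ ≥ C` satisfies
`⟨f, f₀⟩² ≥ 1 − 2c/C` (expectation norms and inner product). -/
theorem approx_recovery
    (U : Type) [Fintype U] [Nonempty U]
    (V' : Submodule ℝ (U → ℝ)) (c C : ℝ) (hc : 0 ≤ c) (hcC : 100 * c < C)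
    (hV' : ∀ g ∈ V', enorm4 g ≤ c * enorm2 g)
    (f₀ : U → ℝ)
    (horth : ∀ g ∈ V', eip f₀ g = 0)
    (hf₀2 : enorm2 f₀ = 1) (hf₀4 : enorm4 f₀ = C)
    (f : U → ℝ) (hfV : f ∈ V' ⊔ Submodule.span ℝ {f₀})
    (hf2 : enorm2 f = 1) (hf4 : C ≤ enorm4 f) :
    1 - 2 * c / C ≤ (eip f f₀) ^ 2 :=
  approx_recovery_general U V' c C hc hcC hV' f₀ horth hf₀2 hf₀4 f hfV hf2 hf4
end

section
/- Let U be a finite nonempty set with |U| = n, and equip ℝ^U with the expectation inner product and norms. Let V' ⊆ ℝ^U be a linear subspace and let f₀ ∈ ℝ^U be nonzero with support S of size |S| = μ·n for some μ ∈ (0,1]; set V = span(V' ∪ {f₀}). Let α > 0, η ≥ 0 and 0 ≤ ε < 1, let f ∈ ℝ^U be nonzero, and suppose: (a) ‖f'‖₂ ≤ α·‖f'‖₁ for every f' ∈ V'; (b) ⟨f₀, f⟩ ≥ (1−ε)·‖f₀‖₂·‖f‖₂; (c) ⟨f', f⟩ ≤ η·‖f'‖₂·‖f‖₂ for every f' ∈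 V'. If η/(1−ε) < 1/(α·√μ) − 2, then ⟨f₀, f⟩ > 0 and f₀/⟨f₀, f⟩ is the unique minimizer of ‖y‖₁ over all y ∈ V with ⟨y, f⟩ = 1; that is, every y ∈ V with ⟨y,f⟩ = 1 and y ≠ f₀/⟨f₀,f⟩ satisfies ‖y‖₁ > ‖f₀/⟨f₀,f⟩‖₁. -/
/-- The expectation `L¹` norm on `ℝ^U`. -/
noncomputable def enorm1 {U : Type} [Fintype U] (f : U → ℝ) : ℝ :=
  (Fintype.card U : ℝ)⁻¹ * ∑ u, |f u|

/-! On the support `S` of `f₀`, Cauchy–Schwarz gives `(1/n) Σ_S |g| ≤ √μ ‖g‖₂`, so for `a ∈ V'`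
the mass of `a` on `S` is at most `α√μ ‖a‖₁`. Hence every `y = a + t f₀ ∈ V` has
`‖y‖₁ ≥ |t| ‖f₀‖₁ + (1 - 2α√μ) ‖a‖₁`. On the other hand `⟨y, f⟩ = 1` forces
`t ≥ ⟨f₀, f⟩⁻¹ (1 - ⟨a, f⟩)`, and (b), (c) bound the loss `⟨a, f⟩ ‖f₀‖₁ / ⟨f₀, f⟩` by
`η/(1-ε) · α√μ ‖a‖₁`, which the hypothesis on `η/(1-ε)` makes strictly smaller than
`(1 - 2α√μ) ‖a‖₁` as soon as `a ≠ 0`. -/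

open Finset

noncomputable def enorm1On {U : Type} [Fintype U] (s : Finset U) (g : U → ℝ) : ℝ :=
  (Fintype.card U : ℝ)⁻¹ * ∑ u ∈ s, |g u|

section

variable {U : Type} [Fintype U]

lemma enorm2_nonneg (g : U → ℝ) : 0 ≤ enorm2 g := Real.sqrt_nonneg _

lemma enorm2_pos {g : U → ℝ} (hg : g ≠ 0) : 0 < enorm2 g := by
  obtain ⟨u, hu⟩ := Function.ne_iff.mp hg
  have : 0 < ∑ v, g v ^ 2 :=
    sum_pos' (fun v _ => sq_nonneg (g v)) ⟨u, mem_univ u, pow_two_pos_of_ne_zero hu⟩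
  have : (0 : ℝ) < Fintype.card U := by exact_mod_cast Fintype.card_pos_iff.mpr ⟨u⟩
  unfold enorm2
  positivity

lemma enorm1_nonneg (g : U → ℝ) : 0 ≤ enorm1 g := by
  unfold enorm1
  positivity

lemma enorm1_pos {g : U → ℝ} (hg : g ≠ 0) : 0 < enorm1 g := by
  obtain ⟨u, hu⟩ := Function.ne_iff.mp hg
  have : 0 < ∑ v, |g v| := sum_pos' (fun v _ => abs_nonneg (g v)) ⟨u, mem_univ u, abs_pos.mpr hu⟩
  have : (0 : ℝ) < Fintype.card U := by exact_mod_cast Fintype.card_pos_iff.mpr ⟨u⟩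
  unfold enorm1
  positivity

lemma enorm1_smul (c : ℝ) (g : U → ℝ) : enorm1 (c • g) = |c| * enorm1 g := by
  simp only [enorm1, Pi.smul_apply, smul_eq_mul, abs_mul, ← mul_sum]
  ring

lemma eip_add_smul_left (a g f : U → ℝ) (t : ℝ) :
    eip (a + t • g) f = eip a f + t * eip g f := by
  simp only [eip, Pi.add_apply, Pi.smul_apply, smul_eq_mul, add_mul, sum_add_distrib, mul_assoc,
    ← mul_sum]
  ring

lemma enorm1_eq_enorm1On {s : Finset U} {g : U → ℝ} (hg : Function.support g ⊆ s) :
    enorm1 g = enorm1On s g := by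
  rw [enorm1, enorm1On, ← sum_subset (subset_univ s) fun u _ hu => ?_]
  rw [Function.notMem_support.mp fun h => hu (hg h), abs_zero]

lemma enorm1On_le_sqrt_mul_enorm2 {s : Finset U} {μ : ℝ} (hμ : 0 ≤ μ)
    (hs : (#s : ℝ) ≤ μ * Fintype.card U) (g : U → ℝ) :
    enorm1On s g ≤ Real.sqrt μ * enorm2 g := by
  set n : ℝ := (Fintype.card U : ℝ)
  rw [enorm1On, enorm2, ← Real.sqrt_mul hμ, Real.le_sqrt (by positivity) (by positivity)]
  calc (n⁻¹ * ∑ u ∈ s, |g u|) ^ 2 = n⁻¹ ^ 2 * (∑ u ∈ s, |g u|) ^ 2 := by ring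
    _ ≤ n⁻¹ ^ 2 * (#s * ∑ u ∈ s, |g u| ^ 2) := by gcongr; exact sq_sum_le_card_mul_sum_sq
    _ ≤ n⁻¹ ^ 2 * (μ * n * ∑ u, g u ^ 2) := by
        simp only [sq_abs]
        gcongr
        exact subset_univ s
    _ = μ * (n⁻¹ * n⁻¹⁻¹ * n⁻¹) * ∑ u, g u ^ 2 := by rw [inv_inv]; ring
    _ = μ * (n⁻¹ * ∑ u, g u ^ 2) := by rw [mul_inv_mul_cancel, mul_assoc]

lemma enorm1_add_smul_ge {s : Finset U} {g : U → ℝ} (hg : Function.support g ⊆ s)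
    (a : U → ℝ) (t : ℝ) :
    |t| * enorm1 g + enorm1 a - 2 * enorm1On s a ≤ enorm1 (a + t • g) := by
  classical
  have pointwise (u : U) :
      |t| * |g u| + |a u| - 2 * (if u ∈ s then |a u| else 0) ≤ |a u + t * g u| := by
    split_ifs with hu
    · have h := abs_sub_abs_le_abs_sub (t * g u) (-a u)
      rw [abs_neg, sub_neg_eq_add, add_comm, abs_mul] at h
      linarith
    · rw [Function.notMem_support.mp fun h => hu (hg h)]
      simp
  have hsum := sum_le_sum fun u (_ : u ∈ univ) => pointwise u
  rw [sum_sub_distrib, sum_add_distrib, ← mul_sum, ← mul_sum, sum_ite_mem, univ_inter] at hsum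
  simp only [enorm1, enorm1On, Pi.add_apply, Pi.smul_apply, smul_eq_mul]
  have := mul_le_mul_of_nonneg_left hsum (inv_nonneg.mpr (Nat.cast_nonneg (Fintype.card U)))
  linarith

lemma enorm1_le_sqrt_mul_enorm2 {s : Finset U} {μ : ℝ} (hμ : 0 ≤ μ)
    (hs : (#s : ℝ) ≤ μ * Fintype.card U) {g : U → ℝ} (hg : Function.support g ⊆ s) :
    enorm1 g ≤ Real.sqrt μ * enorm2 g :=
  enorm1_eq_enorm1On hg ▸ enorm1On_le_sqrt_mul_enorm2 hμ hs g

lemma enorm1_add_smul_ge_of_enorm2_le {s : Finset U} {μ α : ℝ} (hμ : 0 ≤ μ)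
    (hs : (#s : ℝ) ≤ μ * Fintype.card U) {g a : U → ℝ} (hg : Function.support g ⊆ s)
    (ha : enorm2 a ≤ α * enorm1 a) (t : ℝ) :
    |t| * enorm1 g + (1 - 2 * (α * Real.sqrt μ)) * enorm1 a ≤ enorm1 (a + t • g) := by
  have hmass : enorm1On s a ≤ α * Real.sqrt μ * enorm1 a :=
    calc enorm1On s a ≤ Real.sqrt μ * enorm2 a := enorm1On_le_sqrt_mul_enorm2 hμ hs a
      _ ≤ Real.sqrt μ * (α * enorm1 a) := by gcongr
      _ = α * Real.sqrt μ * enorm1 a := by ring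
  linarith [enorm1_add_smul_ge hg a t]

lemma mul_enorm1_le_of_correlated {s : Finset U} {μ α η ε : ℝ} (hμ : 0 ≤ μ)
    (hs : (#s : ℝ) ≤ μ * Fintype.card U) {g f : U → ℝ} (hg : Function.support g ⊆ s)
    (hα : 0 ≤ α) (hη : 0 ≤ η) (hε : ε < 1)
    (hcorr : (1 - ε) * enorm2 g * enorm2 f ≤ eip g f) :
    η * α * enorm2 f * enorm1 g ≤ η / (1 - ε) * (α * Real.sqrt μ) * eip g f := by
  have := sub_pos.mpr hε
  have := enorm2_nonneg f
  calc η * α * enorm2 f * enorm1 g ≤ η * α * enorm2 f * (Real.sqrt μ * enorm2 g) := by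
        gcongr
        exact enorm1_le_sqrt_mul_enorm2 hμ hs hg
    _ = η / (1 - ε) * (α * Real.sqrt μ) * ((1 - ε) * enorm2 g * enorm2 f) := by field_simp
    _ ≤ η / (1 - ε) * (α * Real.sqrt μ) * eip g f := by gcongr

lemma inv_eip_mul_enorm1_le {g f a : U → ℝ} {t K ρ : ℝ} (hc : 0 < eip g f)
    (ha : eip a f ≤ K * enorm1 a) (hK : K * enorm1 g ≤ ρ * eip g f)
    (hy : eip (a + t • g) f = 1) :
    (eip g f)⁻¹ * enorm1 g ≤ t * enorm1 g + ρ * enorm1 a := by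
  rw [eip_add_smul_left] at hy
  rw [inv_mul_le_iff₀ hc]
  nlinarith [enorm1_nonneg a, enorm1_nonneg g]

end

lemma mul_lt_one_sub_two_mul {r P : ℝ} (hP : 0 < P) (h : r < 1 / P - 2) : r * P < 1 - 2 * P := by
  rw [lt_sub_iff_add_lt, lt_div_iff₀ hP] at h
  linarith

theorem exact_recovery_general
    (U : Type) [Fintype U]
    (V' : Submodule ℝ (U → ℝ)) (f₀ : U → ℝ) (hf₀ : f₀ ≠ 0)
    (μ : ℝ) (hμ0 : 0 < μ)
    (hsupp : ((Function.support f₀).ncard : ℝ) = μ * Fintype.card U)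
    (α η ε : ℝ) (hα : 0 < α) (hη : 0 ≤ η) (hε1 : ε < 1)
    (f : U → ℝ) (hf : f ≠ 0)
    (hL21 : ∀ f' ∈ V', enorm2 f' ≤ α * enorm1 f')
    (hcorr : eip f₀ f ≥ (1 - ε) * enorm2 f₀ * enorm2 f)
    (huncorr : ∀ f' ∈ V', eip f' f ≤ η * enorm2 f' * enorm2 f)
    (hcond : η / (1 - ε) < 1 / (α * Real.sqrt μ) - 2) :
    0 < eip f₀ f ∧
    ∀ y ∈ V' ⊔ Submodule.span ℝ {f₀}, eip y f = 1 →
      y ≠ (eip f₀ f)⁻¹ • f₀ → enorm1 ((eip f₀ f)⁻¹ • f₀) < enorm1 y := by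
  classical
  set S := (Function.support f₀).toFinset
  have hf₀S : Function.support f₀ ⊆ S := by simp [S]
  have hS : (#S : ℝ) ≤ μ * Fintype.card U := by rw [← hsupp, Set.ncard_eq_toFinset_card']
  have hP : 0 < α * Real.sqrt μ := mul_pos hα (Real.sqrt_pos.mpr hμ0)
  have hc : 0 < eip f₀ f := by
    have := enorm2_pos hf₀; have := enorm2_pos hf; have := sub_pos.mpr hε1
    exact hcorr.trans_lt' (by positivity)
  refine ⟨hc, fun y hy hyf hne => ?_⟩
  obtain ⟨a, ha, _, hb, rfl⟩ := Submodule.mem_sup.mp hy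
  obtain ⟨t, rfl⟩ := Submodule.mem_span_singleton.mp hb
  have ha0 : a ≠ 0 := by
    rintro rfl
    rw [eip_add_smul_left, show eip 0 f = 0 by simp [eip], zero_add] at hyf
    exact hne (by rw [zero_add, eq_inv_of_mul_eq_one_left hyf])
  have haf : eip a f ≤ η * α * enorm2 f * enorm1 a :=
    calc eip a f ≤ η * enorm2 a * enorm2 f := huncorr a ha
      _ ≤ η * (α * enorm1 a) * enorm2 f := by have := enorm2_nonneg f; gcongr; exact hL21 a ha
      _ = η * α * enorm2 f * enorm1 a := by ring
  rw [enorm1_smul, abs_of_pos (inv_pos.mpr hc)]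
  calc (eip f₀ f)⁻¹ * enorm1 f₀ ≤ t * enorm1 f₀ + η / (1 - ε) * (α * Real.sqrt μ) * enorm1 a :=
        inv_eip_mul_enorm1_le hc haf
          (mul_enorm1_le_of_correlated hμ0.le hS hf₀S hα.le hη hε1 hcorr) hyf
    _ < |t| * enorm1 f₀ + (1 - 2 * (α * Real.sqrt μ)) * enorm1 a :=
        add_lt_add_of_le_of_lt (mul_le_mul_of_nonneg_right (le_abs_self t) (enorm1_nonneg f₀))
          (mul_lt_mul_of_pos_right (mul_lt_one_sub_two_mul hP hcond) (enorm1_pos ha0))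
    _ ≤ enorm1 (a + t • f₀) := enorm1_add_smul_ge_of_enorm2_le hμ0.le hS hf₀S (hL21 a ha) t

/-- **Exact recovery** (Theorem 5.4).
Let `V = span(V' ∪ {f₀})` where `f₀ ≠ 0` is `μ`-sparse (`|supp f₀| = μ·n`).  Suppose
(a) `‖f'‖₂ ≤ α‖f'‖₁` on `V'`, (b) `⟨f₀,f⟩ ≥ (1−ε)‖f₀‖₂‖f‖₂`, and
(c) `⟨f',f⟩ ≤ η‖f'‖₂‖f‖₂` on `V'`.  If `η/(1−ε) < 1/(α√μ) − 2`, then `⟨f₀,f⟩ > 0`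
and `f₀/⟨f₀,f⟩` is the unique minimizer of `‖y‖₁` over `y ∈ V` with `⟨y,f⟩ = 1`. -/
theorem exact_recovery
    (U : Type) [Fintype U] [Nonempty U]
    (V' : Submodule ℝ (U → ℝ)) (f₀ : U → ℝ) (hf₀ : f₀ ≠ 0)
    (μ : ℝ) (hμ0 : 0 < μ) (hμ1 : μ ≤ 1)
    (hsupp : ((Function.support f₀).ncard : ℝ) = μ * Fintype.card U)
    (α η ε : ℝ) (hα : 0 < α) (hη : 0 ≤ η) (hε0 : 0 ≤ ε) (hε1 : ε < 1)
    (f : U → ℝ) (hf : f ≠ 0)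
    (hL21 : ∀ f' ∈ V', enorm2 f' ≤ α * enorm1 f')
    (hcorr : eip f₀ f ≥ (1 - ε) * enorm2 f₀ * enorm2 f)
    (huncorr : ∀ f' ∈ V', eip f' f ≤ η * enorm2 f' * enorm2 f)
    (hcond : η / (1 - ε) < 1 / (α * Real.sqrt μ) - 2) :
    0 < eip f₀ f ∧
    ∀ y ∈ V' ⊔ Submodule.span ℝ {f₀}, eip y f = 1 →
      y ≠ (eip f₀ f)⁻¹ • f₀ → enorm1 ((eip f₀ f)⁻¹ • f₀) < enorm1 y :=
  exact_recovery_general U V' f₀ hf₀ μ hμ0 hsupp α η ε hα hη hε1 f hf hL21 hcorr huncorr hcond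
end

section
/- Let P : ℝⁿ → ℝ be a homogeneous polynomial of degree 4 and let c ∈ ℝ. Then the following are equivalent: (i) there exists a symmetric n²×n² real matrix M such that (x⊗x)ᵀM(x⊗x) = P(x) for all x ∈ ℝⁿ and all eigenvalues of M are at most c (equivalently, cI − M is positive semidefinite); (ii) there exist finitely many real polynomials R₁,…,R_m on ℝⁿ, each of degree at most 2, such that P(x) = c·(Σᵢ xᵢ²)² − Σⱼ Rⱼ(x)² for all x ∈ ℝⁿ. -/
/-!
Write `y = x ⊗ x`, so that `(∑ xᵢ²)² = y ⬝ y` and a quadratic form `∑ b(i,k) xᵢ xₖ` is `b ⬝ y`.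
If `cI − M = Bᵀ B`, then `yᵀ M y = c (y ⬝ y) − ∑ⱼ (Bⱼ ⬝ y)²`, and the rows of `B` give the `Rⱼ`.
Conversely, if `P = c (∑ xᵢ²)² − ∑ Rⱼ²` with `deg Rⱼ ≤ 2`, taking degree-4 components (`P` is
homogeneous) lets us replace each `Rⱼ` by its quadratic part `bⱼ ⬝ y`, and then
`M = cI − Bᵀ B` works.
-/

open MvPolynomial Finset Matrix

namespace Finsupp

lemma exists_eq_single_add_single_of_degree_eq_two {σ : Type*} {d : σ →₀ ℕ} (hd : d.degree = 2) :
    ∃ i k, d = single i 1 + single k 1 := by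
  classical
  have hcard : Multiset.card (toMultiset d) = 2 := by
    simpa [card_toMultiset, degree_apply, Finsupp.sum] using hd
  obtain ⟨i, k, hik⟩ := Multiset.card_eq_two.mp hcard
  refine ⟨i, k, ?_⟩
  rw [← toMultiset_toFinsupp d, hik, Multiset.insert_eq_cons, ← Multiset.singleton_add, map_add,
    Multiset.toFinsupp_singleton, Multiset.toFinsupp_singleton]

end Finsupp

namespace MvPolynomial

variable {σ R : Type*} [CommSemiring R]

lemma sum_range_homogeneousComponent_of_totalDegree_le {p : MvPolynomial σ R} {k : ℕ}
    (hp : p.totalDegree ≤ k) : ∑ i ∈ range (k + 1), homogeneousComponent i p = p := by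
  rw [← sum_subset (range_subset_range.mpr (by omega : p.totalDegree + 1 ≤ k + 1))
    (fun i _ hi => homogeneousComponent_eq_zero i p (by simp at hi; omega)),
    sum_homogeneousComponent]

lemma homogeneousComponent_add_mul_of_totalDegree_le {p r : MvPolynomial σ R} {a b : ℕ}
    (hp : p.totalDegree ≤ a) (hr : r.totalDegree ≤ b) :
    homogeneousComponent (a + b) (p * r) = homogeneousComponent a p * homogeneousComponent b r := by
  conv_lhs => rw [← sum_range_homogeneousComponent_of_totalDegree_le hp,
    ← sum_range_homogeneousComponent_of_totalDegree_le hr]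
  simp only [sum_mul_sum, map_sum, homogeneousComponent_of_mem
    ((homogeneousComponent_isHomogeneous _ p).mul (homogeneousComponent_isHomogeneous _ r))]
  rw [sum_eq_single_of_mem a (self_mem_range_succ a)
      fun i hi hia => sum_eq_zero fun j hj => if_neg ?_,
    sum_eq_single_of_mem b (self_mem_range_succ b) fun j _ hjb => if_neg (by omega), if_pos rfl]
  simp only [mem_range] at hi hj
  omega

noncomputable def quadraticPoly [Fintype σ] (b : σ × σ → R) : MvPolynomial σ R :=
  ∑ p, C (b p) * (X p.1 * X p.2)

lemma isHomogeneous_quadraticPoly [Fintype σ] (b : σ × σ → R) :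
    (quadraticPoly b).IsHomogeneous 2 :=
  IsHomogeneous.sum _ _ _ fun p _ =>
    ((isHomogeneous_X R p.1).mul (isHomogeneous_X R p.2)).C_mul (b p)

lemma eval_quadraticPoly [Fintype σ] (b : σ × σ → R) (x : σ → R) :
    eval x (quadraticPoly b) = b ⬝ᵥ fun p => x p.1 * x p.2 := by
  simp [quadraticPoly, dotProduct]

lemma IsHomogeneous.exists_eq_quadraticPoly [Fintype σ] {q : MvPolynomial σ R}
    (hq : q.IsHomogeneous 2) : ∃ b : σ × σ → R, q = quadraticPoly b := by
  classical
  induction hq using IsWeightedHomogeneous.induction_on with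
  | zero => exact ⟨0, by simp [quadraticPoly]⟩
  | add p q _ _ hp hq =>
    obtain ⟨b, rfl⟩ := hp
    obtain ⟨b', rfl⟩ := hq
    exact ⟨b + b', by simp [quadraticPoly, add_mul, sum_add_distrib]⟩
  | monomial d r hd =>
    obtain ⟨i, k, rfl⟩ := Finsupp.exists_eq_single_add_single_of_degree_eq_two
      (by rwa [Finsupp.degree_eq_weight_one])
    refine ⟨Pi.single (i, k) r, ?_⟩
    rw [quadraticPoly, Fintype.sum_eq_single (i, k) fun p hp => by simp [hp]]
    simp [X, monomial_mul, C_mul_monomial]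

lemma dotProduct_self_mul_self_pairs [Fintype σ] (x : σ → R) :
    ((fun p : σ × σ => x p.1 * x p.2) ⬝ᵥ fun p => x p.1 * x p.2) = (∑ i, x i ^ 2) ^ 2 := by
  rw [sq (∑ i, x i ^ 2), sum_mul_sum, dotProduct, Fintype.sum_prod_type]
  exact sum_congr rfl fun i _ => sum_congr rfl fun k _ => by ring

lemma eval_eq_sub_sum_sq_homogeneousComponent_two {ι : Type*} [Fintype σ] [Fintype ι]
    {P : MvPolynomial σ ℝ} (hP : P.IsHomogeneous 4) {c : ℝ} {R : ι → MvPolynomial σ ℝ}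
    (hR : ∀ j, (R j).totalDegree ≤ 2)
    (hPR : ∀ x, eval x P = c * (∑ i, x i ^ 2) ^ 2 - ∑ j, eval x (R j) ^ 2) (x : σ → ℝ) :
    eval x P = c * (∑ i, x i ^ 2) ^ 2 - ∑ j, eval x (homogeneousComponent 2 (R j)) ^ 2 := by
  set Q : MvPolynomial σ ℝ := C c * (∑ i, X i ^ 2) ^ 2 - P
  have hQ : Q = ∑ j, R j ^ 2 := funext fun x => by simp [Q, hPR x]
  have hQ_hom : Q.IsHomogeneous 4 :=
    (((IsHomogeneous.sum _ _ _ fun i _ => isHomogeneous_X_pow i 2).pow 2).C_mul c).sub hP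
  have hQ_top : Q = ∑ j, homogeneousComponent 2 (R j) ^ 2 := by
    rw [← homogeneousComponent_eq_self hQ_hom, hQ, map_sum]
    simp only [sq, ← homogeneousComponent_add_mul_of_totalDegree_le (hR _) (hR _)]
  have := congrArg (eval x) hQ_top
  simp only [map_sub, map_mul, eval_C, map_pow, map_sum, eval_X, Q] at this
  linarith

end MvPolynomial

namespace Matrix

variable {ι κ R : Type*} [Fintype ι] [Fintype κ] [CommRing R]

lemma sum_sum_mul_mul_eq_dotProduct_mulVec (M : Matrix κ κ R) (y : κ → R) :
    ∑ p, ∑ q, y p * M p q * y q = y ⬝ᵥ M *ᵥ y := by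
  rw [dot_mulVec_eq_sum_sum, sum_comm]

lemma dotProduct_mulVec_smul_one_sub_transpose_mul [DecidableEq κ] (c : R) (B : Matrix ι κ R)
    (y : κ → R) : y ⬝ᵥ (c • 1 - Bᵀ * B) *ᵥ y = c * (y ⬝ᵥ y) - ∑ j, (B *ᵥ y) j ^ 2 := by
  rw [sub_mulVec, dotProduct_sub, smul_mulVec, one_mulVec, dotProduct_smul, ← mulVec_mulVec,
    dotProduct_mulVec, vecMul_transpose, smul_eq_mul]
  simp [dotProduct, sq]

lemma PosSemidef.exists_eq_transpose_mul_self {A : Matrix κ κ ℝ} (hA : A.PosSemidef) :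
    ∃ B : Matrix (Fin (Fintype.card κ)) κ ℝ, A = Bᵀ * B := by
  classical
  open scoped MatrixOrder in
  obtain ⟨B, rfl⟩ := CStarAlgebra.nonneg_iff_eq_star_mul_self.mp hA.nonneg
  let e := Fintype.equivFin κ
  refine ⟨B.submatrix e.symm id, ?_⟩
  rw [transpose_submatrix, submatrix_mul_equiv, submatrix_id_id, star_eq_conjTranspose,
    conjTranspose_eq_transpose_of_trivial]

end Matrix

open MvPolynomial in
lemma sum_sum_mul_mul_smul_one_sub_transpose_mul {σ ι : Type*} [Fintype σ] [DecidableEq σ]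
    [Fintype ι] (c : ℝ) (B : Matrix ι (σ × σ) ℝ) (x : σ → ℝ) :
    ∑ p : σ × σ, ∑ q : σ × σ,
        (x p.1 * x p.2) * (c • 1 - Bᵀ * B : Matrix (σ × σ) (σ × σ) ℝ) p q * (x q.1 * x q.2)
      = c * (∑ i, x i ^ 2) ^ 2 - ∑ j, eval x (quadraticPoly (B j)) ^ 2 := by
  rw [sum_sum_mul_mul_eq_dotProduct_mulVec, dotProduct_mulVec_smul_one_sub_transpose_mul,
    dotProduct_self_mul_self_pairs]
  simp only [eval_quadraticPoly, mulVec]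

/-- **Spectral norm and SOS proofs** (Lemma A.12).
For a homogeneous degree-4 polynomial `P` on `ℝⁿ` and `c ∈ ℝ`, the following are
equivalent: (i) there is a symmetric `n²×n²` matrix `M` with
`(x⊗x)ᵀM(x⊗x) = P(x)` for all `x` and `cI − M` positive semidefinite;
(ii) there are polynomials `R₁,…,R_m` of degree at most 2 with
`P(x) = c·(Σᵢ xᵢ²)² − Σⱼ Rⱼ(x)²` for all `x ∈ ℝⁿ`. -/
theorem spectral_norm_sos
    (n : ℕ) (P : MvPolynomial (Fin n) ℝ) (hP : P.IsHomogeneous 4) (c : ℝ) :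
    (∃ M : Matrix (Fin n × Fin n) (Fin n × Fin n) ℝ, M.IsSymm ∧
        (∀ x : Fin n → ℝ,
          ∑ p : Fin n × Fin n, ∑ q : Fin n × Fin n,
            (x p.1 * x p.2) * M p q * (x q.1 * x q.2) = MvPolynomial.eval x P) ∧
        (c • (1 : Matrix (Fin n × Fin n) (Fin n × Fin n) ℝ) - M).PosSemidef)
    ↔ (∃ (m : ℕ) (R : Fin m → MvPolynomial (Fin n) ℝ),
        (∀ j, (R j).totalDegree ≤ 2) ∧
        ∀ x : Fin n → ℝ,
          MvPolynomial.eval x P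
            = c * (∑ i, x i ^ 2) ^ 2 - ∑ j, (MvPolynomial.eval x (R j)) ^ 2) := by
  constructor
  · rintro ⟨M, -, hM, hM_psd⟩
    obtain ⟨B, hB⟩ := hM_psd.exists_eq_transpose_mul_self
    refine ⟨Fintype.card (Fin n × Fin n), fun j => quadraticPoly (B j),
      fun j => (isHomogeneous_quadraticPoly _).totalDegree_le, fun x => ?_⟩
    rw [← hM x, ← sum_sum_mul_mul_smul_one_sub_transpose_mul, ← hB, sub_sub_cancel]
  · rintro ⟨m, R, hR, hPR⟩
    choose b hb using fun j =>
      (homogeneousComponent_isHomogeneous 2 (R j)).exists_eq_quadraticPoly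
    refine ⟨c • 1 - (of b)ᵀ * of b, ?_, fun x => ?_, ?_⟩
    · simp [IsSymm, transpose_sub, transpose_mul]
    · rw [sum_sum_mul_mul_smul_one_sub_transpose_mul,
        eval_eq_sub_sum_sq_homogeneousComponent_two hP hR hPR x]
      simp only [hb]
      rfl
    · rw [sub_sub_cancel]
      simpa using posSemidef_conjTranspose_mul_self (of b)
end

section
/- Let n ≥ 1 and let G be an n×n real symmetric matrix with nonnegative entries each of whose rows sums to 1 (the normalized adjacency matrix of a regular graph on a vertex set V with |V| = n). Let λ ∈ (0,1) and let q ≥ 2 be a real number. Equip ℝ^V with the expectation inner product and norms, let V_{≥λ} be the sum of the eigenspaces of G for eigenvalues at least λ, let P_{≥λ} be the orthogonal projection onto V_{≥λ}, and let ‖P_{≥λ}‖_{q/(q−1)→2} = sup{ ‖P_{≥λ}y‖₂ : y ∈ ℝ^V, ‖y‖_{q/(q−1)} ≤ 1 }. Then for every nonempty subset S ⊆ V with μ(S) = |S|/n and indicator function 1_S, one has 1 − ⟨1_S, G·1_S⟩/μ(S) ≥ 1 − λ − ‖P_{≥λ}‖²_{q/(q−1)→2} · μ(S)^{(q−2)/q}.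 -/
/-!
Write `1_S = f' + f''` with `f' = P 1_S`. Since `G` is symmetric and preserves `V_{≥λ}`, the cross
terms vanish and `⟨1_S, G 1_S⟩ = ⟨f', G f'⟩ + ⟨f'', G f''⟩ ≤ ‖f'‖² + λ ‖f''‖²`: a doubly stochastic
matrix is a contraction, and `f''` is orthogonal to every eigenvector with eigenvalue at least `λ`.
With `‖f''‖² = μ(S) - ‖f'‖²` and `‖f'‖₂ ≤ ‖P‖ ‖1_S‖_{q/(q-1)} = ‖P‖ μ(S)^{(q-1)/q}` this gives the
bound.
-/

open Matrix Finset

theorem Module.End.iSup_eigenspace_mem_invtSubmodule {R M : Type*} [CommRing R] [AddCommGroup M]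
    [Module R M] (f : Module.End R M) (p : R → Prop) :
    (⨆ t, ⨆ (_ : p t), f.eigenspace t) ∈ f.invtSubmodule :=
  iSup₂_le fun t ht =>
    (f.eigenspace_mem_invtSubmodule t).trans (Submodule.comap_mono (le_iSup₂_of_le t ht le_rfl))

theorem OrthonormalBasis.sum_dotProduct_mul_dotProduct {ι : Type*} [Fintype ι]
    (b : OrthonormalBasis ι ℝ (EuclideanSpace ℝ ι)) (x y : ι → ℝ) :
    ∑ i, (x ⬝ᵥ b i) * (b i ⬝ᵥ y) = x ⬝ᵥ y := by
  have := b.sum_inner_mul_inner (WithLp.toLp 2 x) (WithLp.toLp 2 y)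
  simp only [EuclideanSpace.inner_eq_star_dotProduct, star_trivial] at this
  rw [dotProduct_comm, ← this]
  exact Finset.sum_congr rfl fun i _ => by rw [dotProduct_comm x, dotProduct_comm y]

namespace Matrix

variable {ι R : Type*} [Fintype ι]

theorem IsSymm.dotProduct_mulVec_comm [CommSemiring R] {A : Matrix ι ι R} (hA : A.IsSymm)
    (x y : ι → R) : x ⬝ᵥ A *ᵥ y = y ⬝ᵥ A *ᵥ x := by
  rw [dotProduct_mulVec, ← mulVec_transpose, hA.eq, dotProduct_comm]

theorem IsSymm.mem_doublyStochastic [DecidableEq ι] [Semiring R] [PartialOrder R] [IsOrderedRing R]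
    {A : Matrix ι ι R} (hA : A.IsSymm) (hnonneg : ∀ i j, 0 ≤ A i j) (hrow : ∀ i, ∑ j, A i j = 1) :
    A ∈ doublyStochastic R ι :=
  mem_doublyStochastic_iff_sum.2 ⟨hnonneg, hrow, fun j => by simpa only [hA.apply] using hrow j⟩

theorem dotProduct_mulVec_self_le_of_mem_doublyStochastic [DecidableEq ι] [CommRing R]
    [LinearOrder R] [IsStrictOrderedRing R] {M : Matrix ι ι R} (hM : M ∈ doublyStochastic R ι)
    (x : ι → R) : x ⬝ᵥ M *ᵥ x ≤ x ⬝ᵥ x := by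
  obtain ⟨hnonneg, hrow, hcol⟩ := mem_doublyStochastic_iff_sum.1 hM
  have hsq : ∀ i j, M i j * (2 * x i * x j) ≤ M i j * x i ^ 2 + M i j * x j ^ 2 := fun i j => by
    rw [← mul_add]
    exact mul_le_mul_of_nonneg_left (two_mul_le_add_sq _ _) (hnonneg i j)
  have hrow' : ∑ i, ∑ j, M i j * x i ^ 2 = x ⬝ᵥ x := by
    simp only [← Finset.sum_mul, hrow, one_mul, dotProduct, sq]
  have hcol' : ∑ i, ∑ j, M i j * x j ^ 2 = x ⬝ᵥ x := by
    rw [Finset.sum_comm]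
    simp only [← Finset.sum_mul, hcol, one_mul, dotProduct, sq]
  have htwice : 2 * (x ⬝ᵥ M *ᵥ x) = ∑ i, ∑ j, M i j * (2 * x i * x j) := by
    simp only [dotProduct, mulVec, Finset.mul_sum]
    exact Finset.sum_congr rfl fun i _ => Finset.sum_congr rfl fun j _ => by ring
  have hsum := Finset.sum_le_sum fun i (_ : i ∈ Finset.univ) =>
    Finset.sum_le_sum fun j (_ : j ∈ Finset.univ) => hsq i j
  simp only [Finset.sum_add_distrib, hrow', hcol'] at hsum
  linarith

theorem IsHermitian.dotProduct_mulVec_self_le_of_orthogonal_iSup_eigenspace [DecidableEq ι]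
    {A : Matrix ι ι ℝ} (hA : A.IsHermitian) {c : ℝ} {x : ι → ℝ}
    (hx : ∀ y ∈ ⨆ t, ⨆ (_ : c ≤ t), Module.End.eigenspace A.mulVecLin t, x ⬝ᵥ y = 0) :
    x ⬝ᵥ A *ᵥ x ≤ c * (x ⬝ᵥ x) := by
  set b := hA.eigenvectorBasis
  have hcoef : ∀ i, b i ⬝ᵥ A *ᵥ x = hA.eigenvalues i * (x ⬝ᵥ b i) := fun i => by
    rw [(isHermitian_iff_isSymm.1 hA).dotProduct_mulVec_comm, hA.mulVec_eigenvectorBasis,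
      dotProduct_smul, smul_eq_mul]
  have hperp : ∀ i, c ≤ hA.eigenvalues i → x ⬝ᵥ b i = 0 := fun i hi =>
    hx _ <| Submodule.mem_iSup_of_mem _ <| Submodule.mem_iSup_of_mem hi <|
      Module.End.mem_eigenspace_iff.2 (hA.mulVec_eigenvectorBasis i)
  rw [← b.sum_dotProduct_mul_dotProduct x (A *ᵥ x), ← b.sum_dotProduct_mul_dotProduct x x,
    Finset.mul_sum]
  refine Finset.sum_le_sum fun i _ => ?_
  rw [hcoef, dotProduct_comm (b i)]
  rcases le_or_gt c (hA.eigenvalues i) with hi | hi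
  · simp [hperp i hi]
  · nlinarith [mul_self_nonneg (x ⬝ᵥ b i)]

theorem dotProduct_mulVec_self_le_of_sub_orthogonal [DecidableEq ι] {A : Matrix ι ι ℝ}
    (hA : A.IsSymm) (hAds : A ∈ doublyStochastic ℝ ι) {c : ℝ} {x y : ι → ℝ}
    (hy : y ∈ ⨆ t, ⨆ (_ : c ≤ t), Module.End.eigenspace A.mulVecLin t)
    (hxy : ∀ z ∈ ⨆ t, ⨆ (_ : c ≤ t), Module.End.eigenspace A.mulVecLin t, (x - y) ⬝ᵥ z = 0) :
    x ⬝ᵥ A *ᵥ x ≤ c * (x ⬝ᵥ x) + (1 - c) * (y ⬝ᵥ y) := by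
  obtain ⟨z, rfl⟩ : ∃ z, x = y + z := ⟨x - y, (add_sub_cancel y x).symm⟩
  rw [add_sub_cancel_left] at hxy
  have hzy : z ⬝ᵥ y = 0 := hxy y hy
  have hzAy : z ⬝ᵥ A *ᵥ y = 0 :=
    hxy _ (Module.End.iSup_eigenspace_mem_invtSubmodule _ _ hy)
  have hyAz : y ⬝ᵥ A *ᵥ z = 0 := by rw [hA.dotProduct_mulVec_comm, hzAy]
  have hy_le := dotProduct_mulVec_self_le_of_mem_doublyStochastic hAds y
  have hz_le :=
    (isHermitian_iff_isSymm.2 hA).dotProduct_mulVec_self_le_of_orthogonal_iSup_eigenspace hxy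
  simp only [mulVec_add, add_dotProduct, dotProduct_add, dotProduct_comm y z, hzy] at *
  linear_combination hy_le + hz_le + hyAz + hzAy

end Matrix

section ExpectNorm

variable {n : ℕ}

noncomputable def expectNorm (p : ℝ) (y : Fin n → ℝ) : ℝ := ((n : ℝ)⁻¹ * ∑ v, |y v| ^ p) ^ p⁻¹

theorem expectNorm_smul {p : ℝ} (hp : 0 < p) (c : ℝ) (y : Fin n → ℝ) :
    expectNorm p (c • y) = |c| * expectNorm p y := by
  simp only [expectNorm, Pi.smul_apply, smul_eq_mul, abs_mul,
    Real.mul_rpow (abs_nonneg _) (abs_nonneg _), ← Finset.mul_sum]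
  rw [mul_left_comm, Real.mul_rpow (by positivity) (by positivity), ← Real.rpow_mul (abs_nonneg _),
    mul_inv_cancel₀ hp.ne', Real.rpow_one]

theorem expectNorm_indicator {p : ℝ} (hp : p ≠ 0) (S : Finset (Fin n)) :
    expectNorm p (fun u => if u ∈ S then 1 else 0) = (#S / n : ℝ) ^ p⁻¹ := by
  simp [expectNorm, apply_ite, Real.zero_rpow hp, div_eq_inv_mul]

theorem isBounded_setOf_expectNorm_le_one {p : ℝ} (hp : 0 < p) :
    Bornology.IsBounded {y : Fin n → ℝ | expectNorm p y ≤ 1} := by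
  refine (Metric.isBounded_iff_subset_closedBall 0).2
    ⟨n ^ p⁻¹, fun y (hy : expectNorm p y ≤ 1) => ?_⟩
  rw [mem_closedBall_zero_iff, pi_norm_le_iff_of_nonneg (by positivity)]
  intro u
  have hn : (0 : ℝ) < n := by exact_mod_cast u.pos
  have hsum : ∑ v, |y v| ^ p ≤ n := by
    rw [expectNorm, Real.rpow_inv_le_iff_of_pos (by positivity) zero_le_one hp, Real.one_rpow,
      inv_mul_le_iff₀ hn, mul_one] at hy
    exact hy
  rw [Real.norm_eq_abs, Real.le_rpow_inv_iff_of_pos (abs_nonneg _) hn.le hp]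
  exact (Finset.single_le_sum (fun v _ => by positivity) (Finset.mem_univ u)).trans hsum

theorem sqrt_expect_sq_le_sSup_mul_expectNorm (P : (Fin n → ℝ) →ₗ[ℝ] (Fin n → ℝ)) {p : ℝ}
    (hp : 0 < p) {y : Fin n → ℝ} (hy : 0 < expectNorm p y) :
    √((n : ℝ)⁻¹ * ∑ v, P y v ^ 2) ≤
      sSup {z | ∃ y, expectNorm p y ≤ 1 ∧ z = √((n : ℝ)⁻¹ * ∑ v, P y v ^ 2)} *
        expectNorm p y := by
  set g : (Fin n → ℝ) → ℝ := fun y => √((n : ℝ)⁻¹ * ∑ v, P y v ^ 2)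
  have hg_smul : ∀ (c : ℝ) y, g (c • y) = |c| * g y := fun c y => by
    simp only [g, map_smul, Pi.smul_apply, smul_eq_mul, mul_pow, ← Finset.mul_sum]
    rw [mul_left_comm, Real.sqrt_mul (sq_nonneg c), Real.sqrt_sq_eq_abs]
  have hg_cont : Continuous g := by
    have := P.continuous_of_finiteDimensional
    fun_prop
  obtain ⟨M, hM⟩ := (isBounded_setOf_expectNorm_le_one hp).isCompact_closure.bddAbove_image
    hg_cont.continuousOn
  have hbdd : BddAbove {z | ∃ y, expectNorm p y ≤ 1 ∧ z = g y} :=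
    ⟨M, by rintro _ ⟨y, hy, rfl⟩; exact hM ⟨y, subset_closure hy, rfl⟩⟩
  have hunit : expectNorm p ((expectNorm p y)⁻¹ • y) = 1 := by
    rw [expectNorm_smul hp, abs_inv, abs_of_pos hy, inv_mul_cancel₀ hy.ne']
  have hle := le_csSup hbdd ⟨_, hunit.le, rfl⟩
  rwa [hg_smul, abs_inv, abs_of_pos hy, inv_mul_le_iff₀ hy, mul_comm] at hle

end ExpectNorm

theorem norm_bound_implies_expansion_general
    (n : ℕ)
    (G : Matrix (Fin n) (Fin n) ℝ) (hsymm : G.IsSymm)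
    (hnonneg : ∀ i j, 0 ≤ G i j) (hrow : ∀ i, ∑ j, G i j = 1)
    (lam : ℝ) (hlam : lam ∈ Set.Ioo (0 : ℝ) 1) (q : ℝ) (hq : 2 ≤ q)
    (Vge : Submodule ℝ (Fin n → ℝ))
    (hVge : Vge = ⨆ (t : ℝ) (_ : lam ≤ t),
      Module.End.eigenspace (Matrix.mulVecLin G) t)
    (P : (Fin n → ℝ) →ₗ[ℝ] (Fin n → ℝ))
    (hPmem : ∀ f, P f ∈ Vge)
    (hPorth : ∀ f : Fin n → ℝ, ∀ g ∈ Vge,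
      (n : ℝ)⁻¹ * ∑ v, (f v - P f v) * g v = 0)
    (Pnorm : ℝ)
    (hPnorm : Pnorm = sSup {z : ℝ | ∃ y : Fin n → ℝ,
        ((n : ℝ)⁻¹ * ∑ v, |y v| ^ (q / (q - 1))) ^ ((q - 1) / q) ≤ 1 ∧
        z = Real.sqrt ((n : ℝ)⁻¹ * ∑ v, (P y v) ^ 2)})
    (S : Finset (Fin n)) (hS : S.Nonempty) :
    1 - ((n : ℝ)⁻¹ * ∑ v, (if v ∈ S then (1 : ℝ) else 0) *
          (G.mulVec (fun u => if u ∈ S then (1 : ℝ) else 0)) v) / ((S.card : ℝ) / n)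
      ≥ 1 - lam - Pnorm ^ 2 * (((S.card : ℝ) / n) ^ ((q - 2) / q)) := by
  set f : Fin n → ℝ := fun u => if u ∈ S then 1 else 0
  have hn : (0 : ℝ) < n := by exact_mod_cast hS.choose.pos
  have hμ : (0 : ℝ) < #S / n := div_pos (by exact_mod_cast hS.card_pos) hn
  have hq₀ : 0 < q / (q - 1) := div_pos (by linarith) (by linarith)
  have hquad : f ⬝ᵥ G *ᵥ f ≤ lam * (f ⬝ᵥ f) + (1 - lam) * (P f ⬝ᵥ P f) := by
    subst hVge
    exact dotProduct_mulVec_self_le_of_sub_orthogonal hsymm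
      (hsymm.mem_doublyStochastic hnonneg hrow) (hPmem f) fun g hg =>
      (mul_eq_zero.1 (hPorth f g hg)).resolve_left (inv_ne_zero hn.ne')
  have hnorm : √((n : ℝ)⁻¹ * ∑ v, P f v ^ 2) ≤ Pnorm * (#S / n : ℝ) ^ ((q - 1) / q) := by
    rw [hPnorm, ← inv_div q, ← expectNorm_indicator hq₀.ne']
    exact sqrt_expect_sq_le_sSup_mul_expectNorm P hq₀
      (by rw [expectNorm_indicator hq₀.ne']; positivity)
  have hexp : ((#S / n : ℝ) ^ ((q - 1) / q)) ^ 2 = (#S / n : ℝ) ^ ((q - 2) / q) * (#S / n) := by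
    rw [← Real.rpow_natCast, ← Real.rpow_mul hμ.le, ← Real.rpow_add_one hμ.ne']
    congr 1
    field_simp
    ring
  have hPf : (n : ℝ)⁻¹ * (P f ⬝ᵥ P f) ≤ Pnorm ^ 2 * ((#S / n : ℝ) ^ ((q - 2) / q) * (#S / n)) := by
    simpa only [dotProduct, ← sq, mul_pow, hexp] using (Real.sqrt_le_iff.1 hnorm).2
  have hff : f ⬝ᵥ f = #S := by simp [f, dotProduct]
  have hlamPf : 0 ≤ lam * ((n : ℝ)⁻¹ * (P f ⬝ᵥ P f)) :=
    mul_nonneg hlam.1.le (mul_nonneg (inv_nonneg.2 hn.le) (dotProduct_self_star_nonneg _))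
  show 1 - (n : ℝ)⁻¹ * (f ⬝ᵥ G *ᵥ f) / (#S / n) ≥ _
  rw [ge_iff_le, sub_sub, sub_le_sub_iff_left, div_le_iff₀ hμ]
  have hquad' := mul_le_mul_of_nonneg_left hquad (inv_nonneg.2 hn.le)
  rw [hff] at hquad'
  linear_combination hquad' + hPf + hlamPf

/-- **Norm bound implies small-set expansion** (Lemma D.3).
Let `G` be the normalized adjacency matrix of a regular graph on `n` vertices
(symmetric, nonnegative, row sums 1), `λ ∈ (0,1)`, `q ≥ 2`.  Equip `ℝ^V` with the
expectation inner product and norms, let `V_{≥λ}` be the sum of eigenspaces of `G`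
with eigenvalue at least `λ`, let `P` be the orthogonal projection onto `V_{≥λ}` and
`‖P‖_{q/(q−1)→2}` its `q/(q−1) → 2` operator norm.  Then for every nonempty `S ⊆ V`:
`Φ(S) = 1 − ⟨1_S, G·1_S⟩/μ(S) ≥ 1 − λ − ‖P‖²_{q/(q−1)→2}·μ(S)^{(q−2)/q}`. -/
theorem norm_bound_implies_expansion
    (n : ℕ) (hn : 1 ≤ n)
    (G : Matrix (Fin n) (Fin n) ℝ) (hsymm : G.IsSymm)
    (hnonneg : ∀ i j, 0 ≤ G i j) (hrow : ∀ i, ∑ j, G i j = 1)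
    (lam : ℝ) (hlam : lam ∈ Set.Ioo (0 : ℝ) 1) (q : ℝ) (hq : 2 ≤ q)
    (Vge : Submodule ℝ (Fin n → ℝ))
    (hVge : Vge = ⨆ (t : ℝ) (_ : lam ≤ t),
      Module.End.eigenspace (Matrix.mulVecLin G) t)
    (P : (Fin n → ℝ) →ₗ[ℝ] (Fin n → ℝ))
    (hPmem : ∀ f, P f ∈ Vge)
    (hPid : ∀ f ∈ Vge, P f = f)
    (hPorth : ∀ f : Fin n → ℝ, ∀ g ∈ Vge,
      (n : ℝ)⁻¹ * ∑ v, (f v - P f v) * g v = 0)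
    (Pnorm : ℝ)
    (hPnorm : Pnorm = sSup {z : ℝ | ∃ y : Fin n → ℝ,
        ((n : ℝ)⁻¹ * ∑ v, |y v| ^ (q / (q - 1))) ^ ((q - 1) / q) ≤ 1 ∧
        z = Real.sqrt ((n : ℝ)⁻¹ * ∑ v, (P y v) ^ 2)})
    (S : Finset (Fin n)) (hS : S.Nonempty) :
    1 - ((n : ℝ)⁻¹ * ∑ v, (if v ∈ S then (1 : ℝ) else 0) *
          (G.mulVec (fun u => if u ∈ S then (1 : ℝ) else 0)) v) / ((S.card : ℝ) / n)
      ≥ 1 - lam - Pnorm ^ 2 * (((S.card : ℝ) / n) ^ ((q - 2) / q)) :=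
  norm_bound_implies_expansion_general n G hsymm hnonneg hrow lam hlam q hq Vge hVge P hPmem hPorth
    Pnorm hPnorm S hS
end

section
/- Let I be a finite set, let p : I → [0,1] be a probability mass function (Σᵢ pᵢ = 1), let N be a positive integer with Σᵢ pᵢ² ≤ 1/N, and let g : I → ℝ. Then there exists a subset T ⊆ I with |T| = N such that (1/N)·Σ_{x∈T} g(x)² ≥ (Σᵢ pᵢ·|g(i)|)²/4. -/
/-!
Let `μ = Σᵢ pᵢ |gᵢ|` and let `S` be the set where `|g| ≥ μ/2`. Since `Σ p = 1`, the indices outside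
`S` contribute at most `μ/2` to `μ`, so `Σ_S pᵢ |gᵢ| ≥ μ/2`, and Cauchy–Schwarz with the collision
bound gives `Σ_S gᵢ² ≥ N μ²/4`. If `|S| ≥ N`, any `N` elements of `S` work, each having `g² ≥ μ²/4`;
otherwise enlarge `S` to `N` elements, which is possible because `1 = (Σ p)² ≤ |I| Σ p² ≤ |I|/N`.
-/

open Finset

theorem Finset.exists_card_eq_nsmul_le_sum {ι M : Type*} [Fintype ι]
    [AddCommMonoid M] [PartialOrder M] [IsOrderedAddMonoid M]
    {f : ι → M} (hf : ∀ i, 0 ≤ f i) {S : Finset ι} {c : M} (hc : ∀ i ∈ S, c ≤ f i)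
    {N : ℕ} (hN : N ≤ Fintype.card ι) (hS : N • c ≤ ∑ i ∈ S, f i) :
    ∃ T : Finset ι, #T = N ∧ N • c ≤ ∑ i ∈ T, f i := by
  rcases le_total #S N with hle | hge
  · obtain ⟨T, hST, hT⟩ := exists_superset_card_eq hle (by simpa using hN)
    exact ⟨T, hT, hS.trans (sum_le_sum_of_subset_of_nonneg hST fun i _ _ => hf i)⟩
  · obtain ⟨T, hTS, hT⟩ := exists_subset_card_eq hge
    refine ⟨T, hT, ?_⟩
    calc N • c = ∑ _i ∈ T, c := by rw [sum_const, hT]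
      _ ≤ ∑ i ∈ T, f i := sum_le_sum fun i hi => hc i (hTS hi)

section OrderedField

variable {ι 𝕜 : Type*} [Fintype ι] [Field 𝕜] [LinearOrder 𝕜] [IsStrictOrderedRing 𝕜]

theorem pos_and_le_card_of_sum_sq_le_inv {p : ι → 𝕜} (hp1 : ∑ i, p i = 1) {N : ℕ}
    (hcp : ∑ i, p i ^ 2 ≤ 1 / N) : 0 < N ∧ N ≤ Fintype.card ι := by
  have h : (1 : 𝕜) ≤ Fintype.card ι * (1 / N) :=
    calc (1 : 𝕜) = (∑ i, p i) ^ 2 := by rw [hp1, one_pow]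
      _ ≤ #(univ : Finset ι) * ∑ i, p i ^ 2 := sq_sum_le_card_mul_sum_sq
      _ ≤ Fintype.card ι * (1 / N) := by rw [card_univ]; gcongr
  have hN : 0 < N := Nat.pos_of_ne_zero fun hN => by simp [hN] at h; linarith
  refine ⟨hN, ?_⟩
  rw [mul_one_div, le_div_iff₀ (by exact_mod_cast hN), one_mul] at h
  exact_mod_cast h

theorem sum_mul_le_add_sum_filter_le {p f : ι → 𝕜} (hp : ∀ i, 0 ≤ p i)
    (hp1 : ∑ i, p i = 1) {t : 𝕜} (ht : 0 ≤ t) :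
    ∑ i, p i * f i ≤ t + ∑ i with t ≤ f i, p i * f i := by
  classical
  rw [← sum_filter_add_sum_filter_not univ (fun i => t ≤ f i), add_comm]
  gcongr
  calc ∑ i with ¬t ≤ f i, p i * f i ≤ ∑ i with ¬t ≤ f i, p i * t :=
        sum_le_sum fun i hi => mul_le_mul_of_nonneg_left (not_le.mp (mem_filter.mp hi).2).le (hp i)
    _ = t * ∑ i with ¬t ≤ f i, p i := by rw [mul_sum]; simp only [mul_comm]
    _ ≤ t * 1 := by
        gcongr
        exact hp1 ▸ sum_le_sum_of_subset_of_nonneg (subset_univ _) fun i _ _ => hp i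
    _ = t := mul_one t

end OrderedField

theorem collision_probability_large_set_general
    (I : Type) [Fintype I]
    (p : I → ℝ) (hp : ∀ i, 0 ≤ p i) (hp1 : ∑ i, p i = 1)
    (N : ℕ) (hcp : ∑ i, p i ^ 2 ≤ 1 / N)
    (g : I → ℝ) :
    ∃ T : Finset I, T.card = N ∧
      (N : ℝ)⁻¹ * ∑ x ∈ T, g x ^ 2 ≥ (∑ i, p i * |g i|) ^ 2 / 4 := by
  classical
  set μ := ∑ i, p i * |g i|
  have hμ : 0 ≤ μ / 2 := by
    have : 0 ≤ μ := sum_nonneg fun i _ => mul_nonneg (hp i) (abs_nonneg _)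
    positivity
  obtain ⟨hN, hNI⟩ := pos_and_le_card_of_sum_sq_le_inv hp1 hcp
  set S := univ.filter fun i => μ / 2 ≤ |g i|
  have hS : μ / 2 ≤ ∑ i ∈ S, p i * |g i| := by
    linarith [sum_mul_le_add_sum_filter_le (f := fun i => |g i|) hp hp1 hμ]
  have hsqS : ∀ i ∈ S, (μ / 2) ^ 2 ≤ g i ^ 2 := fun i hi => by
    simpa only [sq_abs] using pow_le_pow_left₀ hμ (mem_filter.mp hi).2 2
  have hSsum : N • (μ / 2) ^ 2 ≤ ∑ i ∈ S, g i ^ 2 := by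
    rw [nsmul_eq_mul, ← le_div_iff₀' (by positivity)]
    calc (μ / 2) ^ 2 ≤ (∑ i ∈ S, p i * |g i|) ^ 2 := pow_le_pow_left₀ hμ hS 2
      _ ≤ (∑ i ∈ S, p i ^ 2) * ∑ i ∈ S, |g i| ^ 2 := sum_mul_sq_le_sq_mul_sq S p _
      _ ≤ (1 / N) * ∑ i ∈ S, g i ^ 2 := by
        simp only [sq_abs]
        gcongr
        exact (sum_le_sum_of_subset_of_nonneg (subset_univ S) fun i _ _ => sq_nonneg _).trans hcp
      _ = (∑ i ∈ S, g i ^ 2) / N := one_div_mul_eq_div _ _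
  obtain ⟨T, hT, hTsum⟩ :=
    exists_card_eq_nsmul_le_sum (fun i => sq_nonneg (g i)) hsqS hNI hSsum
  refine ⟨T, hT, ?_⟩
  rw [nsmul_eq_mul, ← le_inv_mul_iff₀ (by positivity)] at hTsum
  linarith

/-- (Lemma D.4.)  Let `p` be a probability mass function on a finite set `I` with
collision probability `Σᵢ pᵢ² ≤ 1/N`, and let `g : I → ℝ`.  Then there is a subset
`T ⊆ I` of size `N` with `(1/N)·Σ_{x∈T} g(x)² ≥ (Σᵢ pᵢ·|g(i)|)²/4`. -/
theorem collision_probability_large_set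
    (I : Type) [Fintype I]
    (p : I → ℝ) (hp : ∀ i, 0 ≤ p i) (hp1 : ∑ i, p i = 1)
    (N : ℕ) (hN : 0 < N) (hcp : ∑ i, p i ^ 2 ≤ 1 / N)
    (g : I → ℝ) :
    ∃ T : Finset I, T.card = N ∧
      (N : ℝ)⁻¹ * ∑ x ∈ T, g x ^ 2 ≥ (∑ i, p i * |g i|) ^ 2 / 4 :=
  collision_probability_large_set_general I p hp hp1 N hcp g
end
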